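/- arXiv:1808.03574 — 12 statements merged into one kernel-verified Lean document; each statement's English description precedes it below -/
import Mathlib

section
/- Let (J,R,Q) be a DH triple of size n such that every eigenvalue of (J−R)Q has negative real part, and let B ∈ ℂ^{n×m}, C ∈ ℂ^{p×n}. For ω ∈ ℝ set G_R(ω) := C·Q·(iω·I_n − (J−R)Q)⁻¹·B (the matrix iω·I_n − (J−R)Q is invertible by the stability assumption). Define S_R := { ‖Δ‖₂ : Δ ∈ ℂ^{m×p} such that (J − (R + BΔC))Q has an eigenvalue with zero real part } and S_J := { ‖Δ‖₂ : Δ ∈ ℂ^{m×p} such that ((J + BΔC) − R)Q has an eigenvalue with zero real part }. Then the following are equivalent: (a) S_R is nonempty; (b) G_R(ω) ≠ 0 for some ω ∈ ℝ; (c) S_J is nonempty. Moreover, when these hold, sup_{ω∈ℝ} ‖G_R(ω)‖₂ is finite and positive, and inf S_R = inf S_J = ( sup_{ω∈ℝ} ‖G_R(ω)‖₂ )⁻¹. -/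
/-!
Write `A = (J - R) Q`. Perturbing `R` by `B Δ C` turns `A` into `A - B Δ (C Q)`, and for
`μ = i ω` (where `μ I - A` is invertible by stability) the matrix determinant lemma gives
`det (A - B Δ (C Q) - μ I) = ± det (μ I - A) · det (I + G_R(ω) Δ)`. So `Δ` destabilizes iff
`I + G_R(ω) Δ` is singular for some `ω`. By the Neumann series this forces
`1 ≤ ‖G_R(ω)‖ ‖Δ‖`; conversely, for a unit vector `u` with `‖G u‖ = ‖G‖` the rank-one matrix
`Δ = -u (G u)ᴴ / ‖G‖²` has norm `‖G‖⁻¹` and kills `G u` under `I + G Δ`. Hence the infimum is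
`(sup_ω ‖G_R(ω)‖)⁻¹`, the supremum being finite because the resolvent is continuous on `i ℝ` and
vanishes at infinity. Perturbing `J` by `B Δ C` is perturbing `R` by `B (-Δ) C`.
-/

open Matrix Filter Topology Bornology
open scoped ComplexOrder

/-- Spectral norm (largest singular value, ℓ²→ℓ² operator norm) of a complex matrix. -/
noncomputable def sNorm {p q : ℕ} (M : Matrix (Fin p) (Fin q) ℂ) : ℝ :=
  ‖LinearMap.toContinuousLinearMap (Matrix.toEuclideanLin M)‖

open scoped Matrix.Norms.L2Operator

theorem sNorm_eq_l2_opNorm {p q : ℕ} (M : Matrix (Fin p) (Fin q) ℂ) : sNorm M = ‖M‖ := rfl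

theorem ciSup_norm_pos {ι E : Type*} [NormedAddCommGroup E] {f : ι → E}
    (hb : BddAbove (Set.range fun i => ‖f i‖)) (hf : ∃ i, f i ≠ 0) : 0 < ⨆ i, ‖f i‖ :=
  let ⟨i, hi⟩ := hf
  (norm_pos_iff.2 hi).trans_le (le_ciSup hb i)

theorem Continuous.bddAbove_range_norm_of_tendsto_cocompact {X E : Type*} [TopologicalSpace X]
    [NormedAddCommGroup E] {f : X → E} (hf : Continuous f) (hlim : Tendsto f (cocompact X) (𝓝 0)) :
    BddAbove (Set.range fun x => ‖f x‖) := by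
  obtain ⟨C, hC⟩ := isBounded_iff_forall_norm_le.1
    (ZeroAtInftyContinuousMap.isBounded_range ⟨⟨f, hf⟩, hlim⟩)
  exact ⟨C, by rintro _ ⟨x, rfl⟩; exact hC _ ⟨x, rfl⟩⟩

theorem ContinuousLinearMap.exists_norm_eq_one_and_norm_apply_eq_opNorm {𝕜 E F : Type*} [RCLike 𝕜]
    [NormedAddCommGroup E] [NormedSpace 𝕜 E] [FiniteDimensional 𝕜 E] [Nontrivial E]
    [NormedAddCommGroup F] [NormedSpace 𝕜 F] (f : E →L[𝕜] F) :
    ∃ x, ‖x‖ = 1 ∧ ‖f x‖ = ‖f‖ := by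
  have := FiniteDimensional.proper_rclike 𝕜 E
  let _ := NormedSpace.restrictScalars ℝ 𝕜 E
  have hK : IsCompact ((fun x => ‖f x‖) '' Metric.sphere 0 1) :=
    (isCompact_sphere 0 1).image (by fun_prop)
  obtain ⟨x, hx, hfx⟩ := hK.sSup_mem ((NormedSpace.sphere_nonempty.2 zero_le_one).image _)
  exact ⟨x, mem_sphere_zero_iff_norm.1 hx, hfx.trans f.sSup_sphere_eq_norm⟩

namespace Matrix

section SmallGain

variable {𝕜 l m : Type*} [RCLike 𝕜] [Fintype l] [Fintype m] [DecidableEq m]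

theorem exists_norm_eq_one_and_norm_mulVec_eq_l2_opNorm [Nonempty m] (G : Matrix l m 𝕜) :
    ∃ u : EuclideanSpace 𝕜 m, ‖u‖ = 1 ∧ ‖(EuclideanSpace.equiv l 𝕜).symm (G *ᵥ u)‖ = ‖G‖ :=
  ((toEuclideanLin (𝕜 := 𝕜)).trans LinearMap.toContinuousLinearMap G
    ).exists_norm_eq_one_and_norm_apply_eq_opNorm

theorem l2_opNorm_vecMulVec (x : EuclideanSpace 𝕜 l) (y : EuclideanSpace 𝕜 m) :
    ‖vecMulVec (x : l → 𝕜) (star (y : m → 𝕜))‖ = ‖x‖ * ‖y‖ := by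
  rw [← InnerProductSpace.symm_toEuclideanLin_rankOne, ← LinearMap.coe_toContinuousLinearMap_symm,
    l2_opNorm_def, LinearEquiv.trans_apply, LinearEquiv.apply_symm_apply,
    LinearEquiv.apply_symm_apply, InnerProductSpace.norm_rankOne]

variable [DecidableEq l]

theorem one_le_l2_opNorm_mul_l2_opNorm_of_det_one_add_mul_eq_zero
    {G : Matrix l m 𝕜} {Δ : Matrix m l 𝕜} (h : (1 + G * Δ).det = 0) : 1 ≤ ‖G‖ * ‖Δ‖ := by
  by_contra! hlt
  have hsmall : ‖-(G * Δ)‖ < 1 := by rw [norm_neg]; exact (l2_opNorm_mul G Δ).trans_lt hlt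
  have hunit := isUnit_one_sub_of_norm_lt_one hsmall
  rw [sub_neg_eq_add, isUnit_iff_isUnit_det, h] at hunit
  exact not_isUnit_zero hunit

theorem exists_l2_opNorm_eq_inv_and_det_one_add_mul_eq_zero {G : Matrix l m 𝕜}
    (hG : G ≠ 0) : ∃ Δ : Matrix m l 𝕜, ‖Δ‖ = ‖G‖⁻¹ ∧ (1 + G * Δ).det = 0 := by
  have : Nonempty m := by
    by_contra hm
    exact hG (ext fun _ j => (hm ⟨j⟩).elim)
  obtain ⟨u, hu, hGu⟩ := exists_norm_eq_one_and_norm_mulVec_eq_l2_opNorm G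
  set w : EuclideanSpace 𝕜 l := (EuclideanSpace.equiv l 𝕜).symm (G *ᵥ u) with hw_def
  have hGpos : 0 < ‖G‖ := norm_pos_iff.2 hG
  have hw : w ≠ 0 := norm_pos_iff.1 (hGu ▸ hGpos)
  have hww : star (w : l → 𝕜) ⬝ᵥ w = (‖G‖ : 𝕜) ^ 2 := by
    rw [dotProduct_comm, ← EuclideanSpace.inner_eq_star_dotProduct, inner_self_eq_norm_sq_to_K, hGu]
  refine ⟨-((‖G‖ : 𝕜) ^ 2)⁻¹ • vecMulVec (u : m → 𝕜) (star (w : l → 𝕜)), ?_,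
    exists_mulVec_eq_zero_iff.1 ⟨w, by simpa using hw, ?_⟩⟩
  · rw [norm_smul, l2_opNorm_vecMulVec, hu, hGu]
    simp [sq, hGpos.ne']
  · have hGsq : (‖G‖ : 𝕜) ^ 2 ≠ 0 := by simp [hGpos.ne']
    rw [add_mulVec, one_mulVec, ← mulVec_mulVec, smul_mulVec, vecMulVec_mulVec, hww,
      op_smul_eq_smul, smul_smul, neg_mul, inv_mul_cancel₀ hGsq, neg_one_smul, mulVec_neg]
    simp [hw_def]

def singularPerturbationNorms {ι : Type*} (G : ι → Matrix l m 𝕜) : Set ℝ :=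
  {x | ∃ Δ : Matrix m l 𝕜, ‖Δ‖ = x ∧ ∃ i, (1 + G i * Δ).det = 0}

variable {ι : Type*} {G : ι → Matrix l m 𝕜}

theorem singularPerturbationNorms_nonempty_iff :
    (singularPerturbationNorms G).Nonempty ↔ ∃ i, G i ≠ 0 := by
  constructor
  · rintro ⟨_, Δ, -, i, hi⟩
    refine ⟨i, fun h0 => ?_⟩
    have := one_le_l2_opNorm_mul_l2_opNorm_of_det_one_add_mul_eq_zero hi
    rw [h0, norm_zero, zero_mul] at this
    exact zero_lt_one.not_ge this
  · rintro ⟨i, hi⟩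
    obtain ⟨Δ, -, hΔ⟩ := exists_l2_opNorm_eq_inv_and_det_one_add_mul_eq_zero hi
    exact ⟨_, Δ, rfl, i, hΔ⟩

theorem csInf_singularPerturbationNorms (hb : BddAbove (Set.range fun i => ‖G i‖))
    (hG : ∃ i, G i ≠ 0) : sInf (singularPerturbationNorms G) = (⨆ i, ‖G i‖)⁻¹ := by
  have hpos := ciSup_norm_pos hb hG
  have : Nonempty ι := let ⟨i, _⟩ := hG; ⟨i⟩
  refine csInf_eq_of_forall_ge_of_forall_gt_exists_lt
    (singularPerturbationNorms_nonempty_iff.2 hG) ?_ fun b hb' => ?_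
  · rintro _ ⟨Δ, rfl, i, hi⟩
    rw [inv_le_iff_one_le_mul₀' hpos]
    exact (one_le_l2_opNorm_mul_l2_opNorm_of_det_one_add_mul_eq_zero hi).trans
      (mul_le_mul_of_nonneg_right (le_ciSup hb i) (norm_nonneg _))
  · have hbpos : 0 < b := (inv_pos.2 hpos).trans hb'
    obtain ⟨i, hi⟩ := exists_lt_of_lt_ciSup (inv_lt_of_inv_lt₀ hpos hb')
    obtain ⟨Δ, hΔ, hdet⟩ := exists_l2_opNorm_eq_inv_and_det_one_add_mul_eq_zero
      (norm_pos_iff.1 ((inv_pos.2 hbpos).trans hi))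
    exact ⟨‖Δ‖, ⟨Δ, rfl, i, hdet⟩, hΔ ▸ inv_lt_of_inv_lt₀ hbpos hi⟩

end SmallGain

section Resolvent

variable {l m n : Type*} [Fintype l] [Fintype m] [Fintype n] [DecidableEq n]

theorem det_sub_mul_mul_sub_smul_eq_zero_iff {K : Type*} [Field K] [DecidableEq l]
    {A : Matrix n n K} {μ : K} (hμ : IsUnit (μ • 1 - A).det) (B : Matrix n m K)
    (Δ : Matrix m l K) (C : Matrix l n K) :
    ((A - B * Δ * C) - μ • 1).det = 0 ↔ (1 + C * (μ • 1 - A)⁻¹ * B * Δ).det = 0 := by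
  have hneg : (A - B * Δ * C) - μ • 1 = -((μ • 1 - A) + (B * Δ) * C) := by abel
  rw [hneg, det_neg, det_add_mul _ _ hμ]
  simp [hμ.ne_zero, Matrix.mul_assoc]

theorem exists_re_eq_zero_det_sub_mul_mul_sub_smul_eq_zero_iff [DecidableEq l] {A : Matrix n n ℂ}
    (hA : ∀ ω : ℝ, IsUnit ((Complex.I * ω) • 1 - A).det) (B : Matrix n m ℂ) (Δ : Matrix m l ℂ)
    (C : Matrix l n ℂ) :
    (∃ μ : ℂ, μ.re = 0 ∧ ((A - B * Δ * C) - μ • 1).det = 0) ↔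
      ∃ ω : ℝ, (1 + C * ((Complex.I * ω) • 1 - A)⁻¹ * B * Δ).det = 0 := by
  constructor
  · rintro ⟨μ, hμ, h⟩
    have hμ' : μ = Complex.I * μ.im := by apply Complex.ext <;> simp [hμ]
    exact ⟨μ.im, (det_sub_mul_mul_sub_smul_eq_zero_iff (hA μ.im) B Δ C).1 (hμ' ▸ h)⟩
  · rintro ⟨ω, h⟩
    exact ⟨Complex.I * ω, by simp, (det_sub_mul_mul_sub_smul_eq_zero_iff (hA ω) B Δ C).2 h⟩

theorem tendsto_inv_smul_one_sub_cobounded (A : Matrix n n ℂ) :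
    Tendsto (fun z : ℂ => (z • 1 - A)⁻¹) (cobounded ℂ) (𝓝 0) := by
  have hres : resolvent A = fun z : ℂ => (z • 1 - A)⁻¹ := funext fun z => by
    rw [resolvent, Algebra.algebraMap_eq_smul_one, nonsing_inv_eq_ringInverse]
  exact hres ▸ spectrum.resolvent_tendsto_cobounded A

theorem continuousAt_inv_smul_one_sub (A : Matrix n n ℂ) {z : ℂ} (hz : IsUnit (z • 1 - A).det) :
    ContinuousAt (fun z : ℂ => (z • 1 - A)⁻¹) z := by
  refine (continuousAt_matrix_inv _ ?_).comp (by fun_prop)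
  rw [Ring.inverse_eq_inv']
  exact continuousAt_inv₀ hz.ne_zero

theorem bddAbove_range_norm_mul_inv_imag_smul_one_sub_mul [DecidableEq m] (A : Matrix n n ℂ)
    (hA : ∀ ω : ℝ, IsUnit ((Complex.I * ω) • 1 - A).det) (B : Matrix n m ℂ) (C : Matrix l n ℂ) :
    BddAbove (Set.range fun ω : ℝ => ‖C * ((Complex.I * ω) • 1 - A)⁻¹ * B‖) := by
  have hI : Tendsto (fun ω : ℝ => Complex.I * ω) (cocompact ℝ) (cobounded ℂ) := by
    rw [← tendsto_norm_atTop_iff_cobounded]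
    exact tendsto_norm_cocompact_atTop.congr fun ω => by simp
  have hCB : Continuous fun X : Matrix n n ℂ => C * X * B := by fun_prop
  refine Continuous.bddAbove_range_norm_of_tendsto_cocompact ?_ ?_
  · exact hCB.comp (continuous_iff_continuousAt.2 fun ω =>
      (continuousAt_inv_smul_one_sub A (hA ω)).comp (f := fun ω : ℝ => Complex.I * ω) (by fun_prop))
  · have h0 : Tendsto (fun X : Matrix n n ℂ => C * X * B) (𝓝 0) (𝓝 0) := by
      simpa using hCB.tendsto 0
    exact h0.comp ((tendsto_inv_smul_one_sub_cobounded A).comp hI)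

end Resolvent

end Matrix

theorem unstructured_stability_radius_R_and_J_general
    {n m p : ℕ}
    (J R Q : Matrix (Fin n) (Fin n) ℂ)
    (hstab : ∀ μ : ℂ, ((J - R) * Q - μ • 1).det = 0 → μ.re < 0)
    (B : Matrix (Fin n) (Fin m) ℂ) (C : Matrix (Fin p) (Fin n) ℂ)
    (GR : ℝ → Matrix (Fin p) (Fin m) ℂ)
    (hGR : ∀ ω : ℝ, GR ω =
      C * Q * ((Complex.I * (ω : ℂ)) • (1 : Matrix (Fin n) (Fin n) ℂ) - (J - R) * Q)⁻¹ * B)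
    (SR SJ : Set ℝ)
    (hSR : SR = {x | ∃ Δ : Matrix (Fin m) (Fin p) ℂ, sNorm Δ = x ∧
      ∃ μ : ℂ, μ.re = 0 ∧ ((J - (R + B * Δ * C)) * Q - μ • 1).det = 0})
    (hSJ : SJ = {x | ∃ Δ : Matrix (Fin m) (Fin p) ℂ, sNorm Δ = x ∧
      ∃ μ : ℂ, μ.re = 0 ∧ (((J + B * Δ * C) - R) * Q - μ • 1).det = 0}) :
    (SR.Nonempty ↔ ∃ ω : ℝ, GR ω ≠ 0) ∧
    (SJ.Nonempty ↔ ∃ ω : ℝ, GR ω ≠ 0) ∧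
    (SR.Nonempty →
      BddAbove (Set.range fun ω : ℝ => sNorm (GR ω)) ∧
      0 < (⨆ ω : ℝ, sNorm (GR ω)) ∧
      sInf SR = (⨆ ω : ℝ, sNorm (GR ω))⁻¹ ∧
      sInf SJ = (⨆ ω : ℝ, sNorm (GR ω))⁻¹) := by
  have hunit (ω : ℝ) : IsUnit ((Complex.I * ω) • 1 - (J - R) * Q).det :=
    isUnit_iff_ne_zero.2 fun h => (hstab _ (by rw [← neg_sub, det_neg, h, mul_zero])).ne (by simp)
  have hSR' : SR = singularPerturbationNorms GR := by
    refine hSR.trans (Set.ext fun x => exists_congr fun Δ => and_congr_right fun _ => ?_)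
    have hperturb : (J - (R + B * Δ * C)) * Q = (J - R) * Q - B * Δ * (C * Q) := by
      rw [Matrix.sub_mul, Matrix.sub_mul, Matrix.add_mul, Matrix.mul_assoc (B * Δ)]
      abel
    simpa only [hperturb, hGR] using
      exists_re_eq_zero_det_sub_mul_mul_sub_smul_eq_zero_iff hunit B Δ (C * Q)
  have hSJ' : SJ = SR := by
    have hflip (Δ : Matrix (Fin m) (Fin p) ℂ) : J + B * -Δ * C - R = J - (R + B * Δ * C) := by
      rw [Matrix.mul_neg, Matrix.neg_mul]
      abel
    rw [hSJ, hSR]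
    ext x
    constructor <;> rintro ⟨Δ, rfl, hΔ⟩ <;> refine ⟨-Δ, norm_neg Δ, ?_⟩
    · rwa [← hflip, neg_neg]
    · rwa [hflip]
  have hbdd : BddAbove (Set.range fun ω : ℝ => ‖GR ω‖) := by
    simpa only [hGR] using bddAbove_range_norm_mul_inv_imag_smul_one_sub_mul _ hunit B (C * Q)
  rw [hSJ', hSR', singularPerturbationNorms_nonempty_iff]
  exact ⟨.rfl, .rfl, fun hG => ⟨hbdd, ciSup_norm_pos (f := GR) hbdd hG,
    csInf_singularPerturbationNorms hbdd hG, csInf_singularPerturbationNorms hbdd hG⟩⟩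

/-- For an asymptotically stable DH system `(J − R)Q`, the unstructured restricted stability
radii with respect to perturbations of `R` and of `J` coincide and are given by the reciprocal
of `sup_ω ‖G_R(ω)‖₂`, where `G_R(ω) = C Q (iω I − (J−R)Q)⁻¹ B`; the corresponding perturbation
sets are nonempty iff `G_R` is not identically zero. -/
theorem unstructured_stability_radius_R_and_J
    {n m p : ℕ}
    (J R Q : Matrix (Fin n) (Fin n) ℂ)
    (hJ : Jᴴ = -J) (hR : R.PosSemidef) (hQ : Q.PosDef)
    (hstab : ∀ μ : ℂ, ((J - R) * Q - μ • 1).det = 0 → μ.re < 0)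
    (B : Matrix (Fin n) (Fin m) ℂ) (C : Matrix (Fin p) (Fin n) ℂ)
    (GR : ℝ → Matrix (Fin p) (Fin m) ℂ)
    (hGR : ∀ ω : ℝ, GR ω =
      C * Q * ((Complex.I * (ω : ℂ)) • (1 : Matrix (Fin n) (Fin n) ℂ) - (J - R) * Q)⁻¹ * B)
    (SR SJ : Set ℝ)
    (hSR : SR = {x | ∃ Δ : Matrix (Fin m) (Fin p) ℂ, sNorm Δ = x ∧
      ∃ μ : ℂ, μ.re = 0 ∧ ((J - (R + B * Δ * C)) * Q - μ • 1).det = 0})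
    (hSJ : SJ = {x | ∃ Δ : Matrix (Fin m) (Fin p) ℂ, sNorm Δ = x ∧
      ∃ μ : ℂ, μ.re = 0 ∧ (((J + B * Δ * C) - R) * Q - μ • 1).det = 0}) :
    (SR.Nonempty ↔ ∃ ω : ℝ, GR ω ≠ 0) ∧
    (SJ.Nonempty ↔ ∃ ω : ℝ, GR ω ≠ 0) ∧
    (SR.Nonempty →
      BddAbove (Set.range fun ω : ℝ => sNorm (GR ω)) ∧
      0 < (⨆ ω : ℝ, sNorm (GR ω)) ∧
      sInf SR = (⨆ ω : ℝ, sNorm (GR ω))⁻¹ ∧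
      sInf SJ = (⨆ ω : ℝ, sNorm (GR ω))⁻¹) :=
  unstructured_stability_radius_R_and_J_general J R Q hstab B C GR hGR SR SJ hSR hSJ
end

section
/- Let H₀, H₁ ∈ ℂ^{m×m} be Hermitian matrices and suppose H₁ is indefinite, i.e., H₁ has both a positive eigenvalue and a negative eigenvalue. Then the supremum over t ∈ ℝ of λ_min(H₀ + t·H₁) is finite and is attained: there exists t* ∈ ℝ with λ_min(H₀ + t*·H₁) = sup_{t∈ℝ} λ_min(H₀ + t·H₁). -/
open Matrix
open scoped ComplexOrder

/-- Smallest (real) eigenvalue of a Hermitian complex matrix, as the infimum of the real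
roots of its characteristic polynomial. -/
noncomputable def lambdaMin {m : ℕ} (H : Matrix (Fin m) (Fin m) ℂ) : ℝ :=
  sInf {r : ℝ | (H - (r : ℂ) • 1).det = 0}

/-!
The function `f t = λ_min(H₀ + t H₁)` is the pointwise minimum, over nonzero vectors `v`, of the
affine functions `t ↦ R(H₀, v) + t R(H₁, v)` built from Rayleigh quotients, and the minimum is
attained at an eigenvector of `H₀ + t H₁`. Hence `f` is concave, and so continuous. Testing with
eigenvectors of `H₁` for a positive and for a negative eigenvalue bounds `f` above by affine
functions of positive and of negative slope, so `f` tends to `-∞` at both ends of `ℝ` and attains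
its supremum.
-/

open Set Filter
open scoped MatrixOrder

theorem Continuous.exists_forall_ge_of_le_affine {f : ℝ → ℝ} (hf : Continuous f) {a b c d : ℝ}
    (ha : 0 < a) (hb : b < 0) (hfa : ∀ t, f t ≤ c + t * a) (hfb : ∀ t, f t ≤ d + t * b) :
    ∃ t₀, ∀ t, f t ≤ f t₀ := by
  refine hf.exists_forall_ge ?_
  rw [cocompact_eq_atBot_atTop, tendsto_sup]
  exact ⟨tendsto_atBot_mono hfa <|
      tendsto_atBot_add_const_left _ c (tendsto_id.atBot_mul_const ha),
    tendsto_atBot_mono hfb <|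
      tendsto_atBot_add_const_left _ d (tendsto_id.atTop_mul_const_of_neg hb)⟩

namespace Matrix

variable {n : Type*}

theorem IsHermitian.add_real_smul {A B : Matrix n n ℂ} (hA : A.IsHermitian) (hB : B.IsHermitian)
    (t : ℝ) : (A + (t : ℂ) • B).IsHermitian :=
  hA.add (hB.smul (Complex.conj_ofReal t))

variable [Fintype n]

theorem exists_mulVec_eq_smul_of_det_sub_smul_eq_zero [DecidableEq n] {K : Type*} [Field K]
    {A : Matrix n n K} {r : K} (h : (A - r • 1).det = 0) : ∃ v ≠ 0, A *ᵥ v = r • v := by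
  obtain ⟨v, hv, hAv⟩ := exists_mulVec_eq_zero_iff.mpr h
  exact ⟨v, hv, by rwa [sub_mulVec, smul_mulVec, one_mulVec, sub_eq_zero] at hAv⟩

noncomputable def rayleighQuotient (A : Matrix n n ℂ) (x : n → ℂ) : ℝ :=
  (star x ⬝ᵥ (A *ᵥ x)).re / (star x ⬝ᵥ x).re

theorem re_dotProduct_star_self_pos {x : n → ℂ} (hx : x ≠ 0) : 0 < (star x ⬝ᵥ x).re :=
  (Complex.pos_iff.mp (dotProduct_star_self_pos_iff.mpr hx)).1

theorem rayleighQuotient_add_smul (A B : Matrix n n ℂ) (t : ℝ) (x : n → ℂ) :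
    rayleighQuotient (A + (t : ℂ) • B) x = rayleighQuotient A x + t * rayleighQuotient B x := by
  simp only [rayleighQuotient, add_mulVec, smul_mulVec, dotProduct_add, dotProduct_smul,
    smul_eq_mul, Complex.add_re, Complex.re_ofReal_mul, add_div, mul_div_assoc]

theorem rayleighQuotient_of_mulVec_eq_smul {A : Matrix n n ℂ} {x : n → ℂ} {r : ℝ} (hx : x ≠ 0)
    (h : A *ᵥ x = (r : ℂ) • x) : rayleighQuotient A x = r := by
  rw [rayleighQuotient, h, dotProduct_smul, smul_eq_mul, Complex.re_ofReal_mul,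
    mul_div_cancel_right₀ _ (re_dotProduct_star_self_pos hx).ne']

end Matrix

section LambdaMin

variable {m : ℕ}

theorem setOf_det_sub_smul_eq_zero_eq_spectrum (A : Matrix (Fin m) (Fin m) ℂ) :
    {r : ℝ | (A - (r : ℂ) • 1).det = 0} = spectrum ℝ A := by
  ext r
  rw [spectrum.mem_iff, Algebra.algebraMap_eq_smul_one, ← Complex.coe_smul, ← IsUnit.neg_iff,
    neg_sub, isUnit_iff_isUnit_det, isUnit_iff_ne_zero, not_not]
  rfl

theorem lambdaMin_eq_sInf_spectrum (A : Matrix (Fin m) (Fin m) ℂ) :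
    lambdaMin A = sInf (spectrum ℝ A) :=
  congrArg sInf (setOf_det_sub_smul_eq_zero_eq_spectrum A)

theorem lambdaMin_le_of_mem_spectrum (A : Matrix (Fin m) (Fin m) ℂ) {r : ℝ}
    (hr : r ∈ spectrum ℝ A) : lambdaMin A ≤ r := by
  rw [lambdaMin_eq_sInf_spectrum]
  exact csInf_le A.finite_real_spectrum.bddBelow hr

theorem det_sub_lambdaMin_smul_eq_zero [Nonempty (Fin m)] {A : Matrix (Fin m) (Fin m) ℂ}
    (hA : A.IsHermitian) : (A - (lambdaMin A : ℂ) • 1).det = 0 := by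
  have hne : (spectrum ℝ A).Nonempty := hA.spectrum_real_eq_range_eigenvalues ▸ range_nonempty _
  have h := hne.csInf_mem A.finite_real_spectrum
  rwa [← lambdaMin_eq_sInf_spectrum, ← setOf_det_sub_smul_eq_zero_eq_spectrum] at h

theorem posSemidef_sub_lambdaMin_smul {A : Matrix (Fin m) (Fin m) ℂ} (hA : A.IsHermitian) :
    (A - (lambdaMin A : ℂ) • 1).PosSemidef := by
  rw [← Matrix.le_iff, Complex.coe_smul, ← Algebra.algebraMap_eq_smul_one]
  exact (algebraMap_le_iff_le_spectrum hA.isSelfAdjoint).mpr fun _ => lambdaMin_le_of_mem_spectrum A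

theorem lambdaMin_le_rayleighQuotient {A : Matrix (Fin m) (Fin m) ℂ} (hA : A.IsHermitian)
    {x : Fin m → ℂ} (hx : x ≠ 0) : lambdaMin A ≤ rayleighQuotient A x := by
  have h := (posSemidef_sub_lambdaMin_smul hA).dotProduct_mulVec_nonneg x
  rw [sub_mulVec, smul_mulVec, one_mulVec, dotProduct_sub, dotProduct_smul, smul_eq_mul,
    sub_nonneg] at h
  rw [rayleighQuotient, le_div_iff₀ (re_dotProduct_star_self_pos hx)]
  simpa using (Complex.le_def.mp h).1

theorem exists_rayleighQuotient_eq_lambdaMin [Nonempty (Fin m)] {A : Matrix (Fin m) (Fin m) ℂ}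
    (hA : A.IsHermitian) : ∃ x ≠ 0, rayleighQuotient A x = lambdaMin A :=
  let ⟨x, hx, hAx⟩ :=
    exists_mulVec_eq_smul_of_det_sub_smul_eq_zero (det_sub_lambdaMin_smul_eq_zero hA)
  ⟨x, hx, rayleighQuotient_of_mulVec_eq_smul hx hAx⟩

theorem lambdaMin_add_smul_le {H₀ H₁ : Matrix (Fin m) (Fin m) ℂ} (hH₀ : H₀.IsHermitian)
    (hH₁ : H₁.IsHermitian) {v : Fin m → ℂ} {a : ℝ} (hv : v ≠ 0) (hH₁v : H₁ *ᵥ v = (a : ℂ) • v)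
    (t : ℝ) : lambdaMin (H₀ + (t : ℂ) • H₁) ≤ rayleighQuotient H₀ v + t * a := by
  have h := lambdaMin_le_rayleighQuotient (hH₀.add_real_smul hH₁ t) hv
  rwa [rayleighQuotient_add_smul, rayleighQuotient_of_mulVec_eq_smul hv hH₁v] at h

theorem concaveOn_lambdaMin_add_smul [Nonempty (Fin m)] {H₀ H₁ : Matrix (Fin m) (Fin m) ℂ}
    (hH₀ : H₀.IsHermitian) (hH₁ : H₁.IsHermitian) :
    ConcaveOn ℝ univ fun t : ℝ => lambdaMin (H₀ + (t : ℂ) • H₁) := by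
  have hH : ∀ t : ℝ, (H₀ + (t : ℂ) • H₁).IsHermitian := hH₀.add_real_smul hH₁
  refine ⟨convex_univ, fun s _ t _ a b ha hb hab => ?_⟩
  obtain ⟨v, hv, hv_min⟩ := exists_rayleighQuotient_eq_lambdaMin (hH (a • s + b • t))
  have hs := lambdaMin_le_rayleighQuotient (hH s) hv
  have ht := lambdaMin_le_rayleighQuotient (hH t) hv
  rw [rayleighQuotient_add_smul] at hs ht
  simp only [smul_eq_mul] at hv_min ⊢
  rw [← hv_min, rayleighQuotient_add_smul]
  linear_combination a * hs + b * ht + rayleighQuotient H₀ v * hab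

theorem continuous_lambdaMin_add_smul [Nonempty (Fin m)] {H₀ H₁ : Matrix (Fin m) (Fin m) ℂ}
    (hH₀ : H₀.IsHermitian) (hH₁ : H₁.IsHermitian) :
    Continuous fun t : ℝ => lambdaMin (H₀ + (t : ℂ) • H₁) :=
  continuousOn_univ.mp ((concaveOn_lambdaMin_add_smul hH₀ hH₁).continuousOn isOpen_univ)

end LambdaMin

/-- If `H₁` is an indefinite Hermitian matrix, then `sup_{t ∈ ℝ} λ_min(H₀ + t H₁)` is finite
and attained at some `t*`. -/
theorem sup_lambdaMin_attained_of_indefinite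
    {m : ℕ} (H0 H1 : Matrix (Fin m) (Fin m) ℂ)
    (hH0 : H0ᴴ = H0) (hH1 : H1ᴴ = H1)
    (hpos : ∃ a : ℝ, 0 < a ∧ (H1 - (a : ℂ) • 1).det = 0)
    (hneg : ∃ b : ℝ, b < 0 ∧ (H1 - (b : ℂ) • 1).det = 0) :
    ∃ tstar : ℝ,
      lambdaMin (H0 + (tstar : ℂ) • H1) = (⨆ t : ℝ, lambdaMin (H0 + (t : ℂ) • H1)) ∧
      ∀ t : ℝ, lambdaMin (H0 + (t : ℂ) • H1) ≤ lambdaMin (H0 + (tstar : ℂ) • H1) := by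
  obtain ⟨a, ha, ha_det⟩ := hpos
  obtain ⟨b, hb, hb_det⟩ := hneg
  obtain ⟨u, hu, hH1u⟩ := exists_mulVec_eq_smul_of_det_sub_smul_eq_zero ha_det
  obtain ⟨w, hw, hH1w⟩ := exists_mulVec_eq_smul_of_det_sub_smul_eq_zero hb_det
  have : Nonempty (Fin m) := (Function.ne_iff.mp hu).nonempty
  obtain ⟨tstar, htstar⟩ := (continuous_lambdaMin_add_smul hH0 hH1).exists_forall_ge_of_le_affine
    ha hb (lambdaMin_add_smul_le hH0 hH1 hu hH1u) (lambdaMin_add_smul_le hH0 hH1 hw hH1w)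
  exact ⟨tstar, (ciSup_eq_of_forall_le_of_forall_lt_exists_gt htstar fun _ h => ⟨tstar, h⟩).symm,
    htstar⟩
end

section
/- (Right tangential interpolation.) Let Ã ∈ ℂ^{n×n}, B̃ ∈ ℂ^{n×m}, C̃ ∈ ℂ^{p×n}, and let V_k, W_k ∈ ℂ^{n×k} satisfy W_kᴴ V_k = I_k. Define Ã_k := W_kᴴ Ã V_k, B̃_k := W_kᴴ B̃, C̃_k := C̃ V_k. Let ŝ ∈ ℂ and b̂ ∈ ℂ^m be such that ŝ·I_n − Ã and ŝ·I_k − Ã_k are invertible, and suppose (ŝ·I_n − Ã)^{−ℓ} B̃ b̂ lies in the column space of V_k for ℓ = 1, …, N. Then C̃ (ŝ·I_n − Ã)^{−(ℓ+1)} B̃ b̂ = C̃_k (ŝ·I_k − Ã_k)^{−(ℓ+1)} B̃_k b̂ for ℓ = 0, …, N−1; equivalently, the transfer functions G(s) := C̃(sI−Ã)⁻¹B̃ and G_k(s) := C̃_k(sI−Ã_k)⁻¹B̃_k satisfy G^{(ℓ)}(ŝ) b̂ = G_k^{(ℓ)}(ŝ) b̂ for ℓ = 0, …, N−1. -/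
/-!
Write `E = sI − A` and let `L` be a left inverse of `V`, so that the reduced pencil is
`E_k = L E V`. If `E⁻¹ y = V c`, then `E_k c = L y`, hence `V E_k⁻¹ L y = E⁻¹ y`: on
vectors whose resolvent image lies in the column space of `V`, the resolvent is reproduced
exactly by the reduced one. Since `L V = 1`, the powers `V E_k⁻ʲ L x` obey the
same recursion as `E⁻ʲ x`, so the identity propagates along the Krylov sequence `E⁻ʲ B b`.
-/

open Matrix

namespace Matrix

variable {R : Type*} [CommRing R] {n k : Type*} [Fintype n] [DecidableEq n]
  [Fintype k] [DecidableEq k]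
  {E : Matrix n n R} {V : Matrix n k R} {L : Matrix k n R}

theorem mulVec_inv_mul_mul_mulVec_of_mem_range (hE : IsUnit E.det)
    (hEk : IsUnit (L * E * V).det) {y : n → R} (hy : E⁻¹ *ᵥ y ∈ Set.range V.mulVec) :
    V *ᵥ ((L * E * V)⁻¹ *ᵥ (L *ᵥ y)) = E⁻¹ *ᵥ y := by
  obtain ⟨c, hc⟩ := hy
  have hLy : L *ᵥ y = (L * E * V) *ᵥ c := by
    rw [← mulVec_mulVec, hc, mulVec_mulVec, Matrix.mul_assoc L, mul_nonsing_inv _ hE,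
      Matrix.mul_one]
  rw [hLy, mulVec_mulVec c, nonsing_inv_mul _ hEk, one_mulVec, hc]

theorem mulVec_inv_mul_mul_pow_mulVec_of_mem_range (hLV : L * V = 1)
    (hE : IsUnit E.det) (hEk : IsUnit (L * E * V).det) {x : n → R} {N : ℕ}
    (hrange : ∀ j : ℕ, 1 ≤ j → j ≤ N → E⁻¹ ^ j *ᵥ x ∈ Set.range V.mulVec) :
    ∀ ℓ < N,
      V *ᵥ ((L * E * V)⁻¹ ^ (ℓ + 1) *ᵥ (L *ᵥ x)) = E⁻¹ ^ (ℓ + 1) *ᵥ x := by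
  intro ℓ hℓ
  induction ℓ with
  | zero =>
    simpa only [zero_add, pow_one] using
      mulVec_inv_mul_mul_mulVec_of_mem_range hE hEk (by simpa using hrange 1 le_rfl hℓ)
  | succ ℓ ih =>
    have hnext : E⁻¹ *ᵥ (E⁻¹ ^ (ℓ + 1) *ᵥ x) ∈ Set.range V.mulVec := by
      rw [mulVec_mulVec, ← pow_succ']
      exact hrange (ℓ + 2) (by omega) hℓ
    set Ek := L * E * V
    calc V *ᵥ (Ek⁻¹ ^ (ℓ + 2) *ᵥ (L *ᵥ x))
        = V *ᵥ (Ek⁻¹ *ᵥ (L *ᵥ (V *ᵥ (Ek⁻¹ ^ (ℓ + 1) *ᵥ (L *ᵥ x))))) := by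
          rw [mulVec_mulVec _ L V, hLV, one_mulVec, mulVec_mulVec _ _ (_ ^ (ℓ + 1)),
            ← pow_succ']
      _ = V *ᵥ (Ek⁻¹ *ᵥ (L *ᵥ (E⁻¹ ^ (ℓ + 1) *ᵥ x))) := by rw [ih (by omega)]
      _ = E⁻¹ ^ (ℓ + 2) *ᵥ x := by
          rw [mulVec_inv_mul_mul_mulVec_of_mem_range hE hEk hnext, mulVec_mulVec,
            ← pow_succ']

end Matrix

/-- Right tangential interpolation: if the Krylov-type vectors `(ŝI − Ã)^{−ℓ} B̃ b̂`
(`ℓ = 1, …, N`) lie in the column space of `V_k` and `W_kᴴ V_k = I`, then the transfer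
functions of the full and the Petrov–Galerkin reduced systems agree, together with their
first `N − 1` derivatives, in the direction `b̂` at `ŝ`. -/
theorem right_tangential_interpolation
    {n m p k N : ℕ}
    (A : Matrix (Fin n) (Fin n) ℂ) (B : Matrix (Fin n) (Fin m) ℂ)
    (C : Matrix (Fin p) (Fin n) ℂ)
    (V W : Matrix (Fin n) (Fin k) ℂ) (hWV : Wᴴ * V = 1)
    (s : ℂ) (b : Fin m → ℂ)
    (hs : IsUnit ((s • (1 : Matrix (Fin n) (Fin n) ℂ) - A)).det)
    (hsk : IsUnit ((s • (1 : Matrix (Fin k) (Fin k) ℂ) - Wᴴ * A * V)).det)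
    (hincl : ∀ ℓ : ℕ, 1 ≤ ℓ → ℓ ≤ N →
      ∃ c : Fin k → ℂ,
        V *ᵥ c = ((s • (1 : Matrix (Fin n) (Fin n) ℂ) - A)⁻¹ ^ ℓ) *ᵥ (B *ᵥ b)) :
    ∀ ℓ : ℕ, ℓ < N →
      C *ᵥ (((s • (1 : Matrix (Fin n) (Fin n) ℂ) - A)⁻¹ ^ (ℓ + 1)) *ᵥ (B *ᵥ b)) =
      (C * V) *ᵥ (((s • (1 : Matrix (Fin k) (Fin k) ℂ) - Wᴴ * A * V)⁻¹ ^ (ℓ + 1)) *ᵥ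
        ((Wᴴ * B) *ᵥ b)) := by
  have hpencil : s • (1 : Matrix (Fin k) (Fin k) ℂ) - Wᴴ * A * V
      = Wᴴ * (s • (1 : Matrix (Fin n) (Fin n) ℂ) - A) * V := by
    rw [Matrix.mul_sub, Matrix.sub_mul, Matrix.mul_smul, Matrix.smul_mul, Matrix.mul_one, hWV]
  rw [hpencil] at hsk ⊢
  intro ℓ hℓ
  rw [← mulVec_mulVec, ← mulVec_mulVec,
    mulVec_inv_mul_mul_pow_mulVec_of_mem_range hWV hs hsk hincl ℓ hℓ]
end

section
/- (Left tangential interpolation.) Let Ã ∈ ℂ^{n×n}, B̃ ∈ ℂ^{n×m}, C̃ ∈ ℂ^{p×n}, and let V_k, W_k ∈ ℂ^{n×k} satisfy W_kᴴ V_k = I_k. Define Ã_k := W_kᴴ Ã V_k, B̃_k := W_kᴴ B̃, C̃_k := C̃ V_k. Let ŝ ∈ ℂ and ĉ ∈ ℂ^p be such that ŝ·I_n − Ã and ŝ·I_k − Ã_k are invertible, and suppose ( ĉᴴ C̃ (ŝ·I_n − Ã)^{−ℓ} )ᴴ lies in the column space of W_k for ℓ = 1, …, N. Then ĉᴴ C̃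 (ŝ·I_n − Ã)^{−(ℓ+1)} B̃ = ĉᴴ C̃_k (ŝ·I_k − Ã_k)^{−(ℓ+1)} B̃_k for ℓ = 0, …, N−1; equivalently, the transfer functions G(s) := C̃(sI−Ã)⁻¹B̃ and G_k(s) := C̃_k(sI−Ã_k)⁻¹B̃_k satisfy ĉᴴ G^{(ℓ)}(ŝ) = ĉᴴ G_k^{(ℓ)}(ŝ) for ℓ = 0, …, N−1. -/
/-!
Write `E = sI − A` and `E_k = Wᴴ E V = sI − Wᴴ A V`, and let `x_ℓ = ĉᴴ C E^{−ℓ}`.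
If `x_{ℓ+1} = z Wᴴ`, then `z = x_{ℓ+1} V` (as `Wᴴ V = I`) and `z E_k = x_{ℓ+1} E V = x_ℓ V`,
so by induction `x_ℓ V = ĉᴴ C V E_k^{−ℓ}` and hence `x_ℓ = ĉᴴ C V E_k^{−ℓ} Wᴴ` for `1 ≤ ℓ ≤ N`.
Multiplying on the right by `B` gives the interpolation identities.
-/

open Matrix

namespace Matrix

variable {R : Type*} [CommRing R] {n k : Type*} [Fintype n]

theorem mul_smul_one_sub_mul_of_mul_eq_one [DecidableEq n] [DecidableEq k]
    {U : Matrix k n R} {V : Matrix n k R} (hUV : U * V = 1) (s : R) (A : Matrix n n R) :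
    U * (s • (1 : Matrix n n R) - A) * V = s • (1 : Matrix k k R) - U * A * V := by
  rw [Matrix.mul_sub, Matrix.sub_mul, Matrix.mul_smul, Matrix.mul_one, Matrix.smul_mul, hUV]

theorem vecMul_mul_eq_of_vecMul_eq [Fintype k] [DecidableEq k]
    {U : Matrix k n R} {V : Matrix n k R} (hUV : U * V = 1)
    {z : k → R} {x : n → R} (hx : z ᵥ* U = x) : x ᵥ* V = z := by
  rw [← hx, vecMul_vecMul, hUV, vecMul_one]

section Krylov

variable [DecidableEq n] [Fintype k] [DecidableEq k]
  {E : Matrix n n R} {U : Matrix k n R} {V : Matrix n k R} {y : n → R} {N : ℕ}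

theorem vecMul_inv_pow_vecMul_eq (hUV : U * V = 1) (hE : IsUnit E.det)
    (hEk : IsUnit (U * E * V).det)
    (hrow : ∀ ℓ, 1 ≤ ℓ → ℓ ≤ N → ∃ z : k → R, z ᵥ* U = y ᵥ* E⁻¹ ^ ℓ) :
    ∀ ℓ ≤ N, y ᵥ* E⁻¹ ^ ℓ ᵥ* V = y ᵥ* V ᵥ* (U * E * V)⁻¹ ^ ℓ := by
  intro ℓ
  induction ℓ with
  | zero => simp
  | succ ℓ ih =>
    intro hℓ
    obtain ⟨z, hz⟩ := hrow (ℓ + 1) ℓ.succ_pos hℓ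
    have hstep : y ᵥ* E⁻¹ ^ (ℓ + 1) ᵥ* E = y ᵥ* E⁻¹ ^ ℓ := by
      rw [vecMul_vecMul, pow_succ, Matrix.mul_assoc, nonsing_inv_mul E hE, Matrix.mul_one]
    have hzEk : z ᵥ* (U * E * V) = y ᵥ* V ᵥ* (U * E * V)⁻¹ ^ ℓ := by
      rw [← ih (by omega), ← hstep, ← hz, vecMul_vecMul, vecMul_vecMul, Matrix.mul_assoc]
    calc y ᵥ* E⁻¹ ^ (ℓ + 1) ᵥ* V = z := vecMul_mul_eq_of_vecMul_eq hUV hz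
      _ = z ᵥ* (U * E * V) ᵥ* (U * E * V)⁻¹ := by
        rw [vecMul_vecMul, mul_nonsing_inv _ hEk, vecMul_one]
      _ = y ᵥ* V ᵥ* (U * E * V)⁻¹ ^ (ℓ + 1) := by
        rw [hzEk, vecMul_vecMul, ← pow_succ]

theorem vecMul_inv_pow_eq (hUV : U * V = 1) (hE : IsUnit E.det) (hEk : IsUnit (U * E * V).det)
    (hrow : ∀ ℓ, 1 ≤ ℓ → ℓ ≤ N → ∃ z : k → R, z ᵥ* U = y ᵥ* E⁻¹ ^ ℓ)
    {ℓ : ℕ} (h1 : 1 ≤ ℓ) (hN : ℓ ≤ N) :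
    y ᵥ* E⁻¹ ^ ℓ = y ᵥ* V ᵥ* (U * E * V)⁻¹ ^ ℓ ᵥ* U := by
  obtain ⟨z, hz⟩ := hrow ℓ h1 hN
  rw [← vecMul_inv_pow_vecMul_eq hUV hE hEk hrow ℓ hN, vecMul_mul_eq_of_vecMul_eq hUV hz, hz]

end Krylov

end Matrix

/-- Left tangential interpolation: if the vectors `(ĉᴴ C̃ (ŝI − Ã)^{−ℓ})ᴴ` (`ℓ = 1, …, N`)
lie in the column space of `W_k` and `W_kᴴ V_k = I`, then the transfer functions of the full
and the Petrov–Galerkin reduced systems agree, together with their first `N − 1` derivatives,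
in the left direction `ĉ` at `ŝ`. -/
theorem left_tangential_interpolation
    {n m p k N : ℕ}
    (A : Matrix (Fin n) (Fin n) ℂ) (B : Matrix (Fin n) (Fin m) ℂ)
    (C : Matrix (Fin p) (Fin n) ℂ)
    (V W : Matrix (Fin n) (Fin k) ℂ) (hWV : Wᴴ * V = 1)
    (s : ℂ) (c : Fin p → ℂ)
    (hs : IsUnit ((s • (1 : Matrix (Fin n) (Fin n) ℂ) - A)).det)
    (hsk : IsUnit ((s • (1 : Matrix (Fin k) (Fin k) ℂ) - Wᴴ * A * V)).det)
    (hincl : ∀ ℓ : ℕ, 1 ≤ ℓ → ℓ ≤ N →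
      ∃ d : Fin k → ℂ,
        W *ᵥ d = star ((star c) ᵥ* (C * ((s • (1 : Matrix (Fin n) (Fin n) ℂ) - A)⁻¹ ^ ℓ)))) :
    ∀ ℓ : ℕ, ℓ < N →
      (star c) ᵥ* (C * ((s • (1 : Matrix (Fin n) (Fin n) ℂ) - A)⁻¹ ^ (ℓ + 1)) * B) =
      (star c) ᵥ* ((C * V) * ((s • (1 : Matrix (Fin k) (Fin k) ℂ) - Wᴴ * A * V)⁻¹ ^ (ℓ + 1))
        * (Wᴴ * B)) := by
  intro ℓ hℓ
  have hEk := mul_smul_one_sub_mul_of_mul_eq_one hWV s A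
  have hrow : ∀ ℓ, 1 ≤ ℓ → ℓ ≤ N → ∃ z : Fin k → ℂ,
      z ᵥ* Wᴴ = star c ᵥ* C ᵥ* (s • (1 : Matrix (Fin n) (Fin n) ℂ) - A)⁻¹ ^ ℓ := by
    intro ℓ h1 hN
    obtain ⟨d, hd⟩ := hincl ℓ h1 hN
    refine ⟨star d, ?_⟩
    rw [← star_mulVec, hd, star_star, vecMul_vecMul]
  have key := vecMul_inv_pow_eq hWV hs (hEk ▸ hsk) hrow ℓ.succ_pos hℓ
  rw [hEk] at key
  simp only [← vecMul_vecMul, key]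
end

section
/- (Structure-preserving right interpolation for DH systems.) Let (J,R,Q) be a DH triple of size n, B ∈ ℂ^{n×m}, C ∈ ℂ^{p×n}, ŝ ∈ ℂ with ŝ·I_n − (J−R)Q invertible, and b̂ ∈ ℂ^m. Let V_k ∈ ℂ^{n×k} have orthonormal columns (V_kᴴV_k = I_k) and suppose (ŝ·I_n − (J−R)Q)^{−ℓ} B b̂ lies in the column space of V_k for ℓ = 1, …, N. Set W_k := Q V_k (V_kᴴ Q V_k)⁻¹, J_k := W_kᴴ J W_k, R_k := W_kᴴ R W_k, Q_k := V_kᴴ Q V_k, B_k := W_kᴴ B, C_k := C W_k. Then: (i) J_k is skew-Hermitian, R_k is Hermitian positive semidefinite, and Q_k is Hermitian positive definite (so (J_k,R_k,Q_k) is a DH triple of size k); and (ii) if additionally ŝ·I_k − (J_k−R_k)Q_k is invertible, then C Q (ŝ·I_n − (J−R)Q)^{−(j+1)} B b̂ = C_k Q_k (ŝ·I_k − (J_k−R_k)Q_k)^{−(j+1)} B_k b̂ for j = 0, …, N−1; equivalently, G(s) := CQ(sI−(J−R)Q)⁻¹B and G_k(s) := C_kQ_k(sI−(J_k−R_k)Q_k)⁻¹B_k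 satisfy G^{(j)}(ŝ) b̂ = G_k^{(j)}(ŝ) b̂ for j = 0, …, N−1. -/
open Matrix
open scoped ComplexOrder

/-!
With `M = Vᴴ Q V` and `W = Q V M⁻¹` one has `Wᴴ V = 1` and `W M = Q V`, so the reduced
system matrix `ŝ I − (J_k − R_k) Q_k` is the compression `Wᴴ (ŝ I − (J − R) Q) V`.
Skew-Hermitian and semidefinite matrices are preserved by the congruence `X ↦ Wᴴ X W`, and
`M` is positive definite because `V` is injective. For the moments: if `V c = A⁻¹ x`, then
`(Wᴴ A V) c = Wᴴ x`, so the reduced resolvent reproduces `A⁻¹ x` in the column space of `V`;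
iterating this along the Krylov vectors `A⁻ˡ B b̂` matches the first `N` moments.
-/

namespace Matrix

variable {n k : Type*} [Fintype n]

lemma conjTranspose_mul_mul_same_of_conjTranspose_eq_neg {R : Type*} [Ring R] [StarRing R]
    {J : Matrix n n R} (hJ : Jᴴ = -J) (W : Matrix n k R) :
    (Wᴴ * J * W)ᴴ = -(Wᴴ * J * W) := by
  rw [conjTranspose_mul, conjTranspose_mul, conjTranspose_conjTranspose, hJ,
    Matrix.neg_mul, Matrix.mul_neg, Matrix.mul_assoc]

variable [Fintype k]

lemma mulVec_injective_of_conjTranspose_mul_self_eq_one {R : Type*} [Semiring R] [StarRing R]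
    {V : Matrix n k R} [DecidableEq k] (hV : Vᴴ * V = 1) : Function.Injective V.mulVec :=
  Function.LeftInverse.injective (g := Vᴴ.mulVec) fun x => by
    rw [mulVec_mulVec, hV, one_mulVec]

variable {K : Type*} [CommRing K] [DecidableEq k]

lemma conjTranspose_mul_inv_mul_self {Q : Matrix n n K} [StarRing K] (hQ : Q.IsHermitian)
    {V : Matrix n k K} (hM : IsUnit (Vᴴ * Q * V).det) :
    (Q * V * (Vᴴ * Q * V)⁻¹)ᴴ * V = 1 := by
  have hMH : (Vᴴ * Q * V)ᴴ = Vᴴ * Q * V := isHermitian_conjTranspose_mul_mul V hQ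
  rw [conjTranspose_mul, conjTranspose_nonsing_inv, hMH, conjTranspose_mul, hQ.eq,
    Matrix.mul_assoc, Matrix.mul_assoc, ← Matrix.mul_assoc Vᴴ, nonsing_inv_mul _ hM]

variable [DecidableEq n]

lemma smul_one_sub_mul_mul_eq_mul_smul_one_sub_mul {L : Matrix k n K}
    {V W : Matrix n k K} {Q M : Matrix n n K} {Qk : Matrix k k K} (hLV : L * V = 1)
    (hWQk : W * Qk = Q * V) (s : K) :
    s • (1 : Matrix k k K) - L * M * W * Qk = L * (s • (1 : Matrix n n K) - M * Q) * V := by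
  rw [Matrix.mul_sub, Matrix.sub_mul, Matrix.mul_smul, Matrix.smul_mul, Matrix.mul_one, hLV,
    Matrix.mul_assoc (L * M), hWQk]
  simp only [Matrix.mul_assoc]

section Compression

variable {A : Matrix n n K} {L : Matrix k n K} {V : Matrix n k K}

lemma mulVec_inv_compression_mulVec {x : n → K} {c : k → K} (hA : IsUnit A.det)
    (hAk : IsUnit (L * A * V).det) (hc : V *ᵥ c = A⁻¹ *ᵥ x) :
    V *ᵥ ((L * A * V)⁻¹ *ᵥ (L *ᵥ x)) = A⁻¹ *ᵥ x := by
  have hc' : (L * A * V) *ᵥ c = L *ᵥ x := by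
    rw [← mulVec_mulVec, hc, mulVec_mulVec, Matrix.mul_assoc, mul_nonsing_inv _ hA,
      Matrix.mul_one]
  rw [← hc', mulVec_mulVec c, nonsing_inv_mul _ hAk, one_mulVec, hc]

theorem mulVec_inv_compression_pow_mulVec {N : ℕ} {u : n → K} (hLV : L * V = 1)
    (hA : IsUnit A.det) (hAk : IsUnit (L * A * V).det)
    (hrange : ∀ ℓ : ℕ, 1 ≤ ℓ → ℓ ≤ N → ∃ c : k → K, V *ᵥ c = A⁻¹ ^ ℓ *ᵥ u) :
    ∀ j < N, V *ᵥ ((L * A * V)⁻¹ ^ (j + 1) *ᵥ (L *ᵥ u)) = A⁻¹ ^ (j + 1) *ᵥ u := by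
  intro j hj
  obtain ⟨c, hc⟩ := hrange (j + 1) (Nat.le_add_left 1 j) hj
  induction j generalizing c with
  | zero => simpa using mulVec_inv_compression_mulVec hA hAk (by simpa using hc)
  | succ j ih =>
    obtain ⟨c', hc'⟩ := hrange (j + 1) (Nat.le_add_left 1 j) (by omega)
    have hprev := ih (by omega) c' hc'
    have hstep : (L * A * V)⁻¹ ^ (j + 2) *ᵥ (L *ᵥ u) =
        (L * A * V)⁻¹ *ᵥ (L *ᵥ (A⁻¹ ^ (j + 1) *ᵥ u)) := by
      rw [← hprev, mulVec_mulVec _ L V, hLV, one_mulVec, mulVec_mulVec _ (L * A * V)⁻¹,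
        ← pow_succ']
    rw [pow_succ' A⁻¹, ← mulVec_mulVec] at hc ⊢
    rw [hstep]
    exact mulVec_inv_compression_mulVec hA hAk hc

end Compression

end Matrix

/-- Structure-preserving right tangential interpolation for DH systems: the Petrov–Galerkin
reduction with `W_k = Q V_k (V_kᴴ Q V_k)⁻¹` yields a reduced DH triple whose transfer
function Hermite-interpolates `G(s) = CQ(sI − (J−R)Q)⁻¹B` in the direction `b̂` at `ŝ`. -/
theorem structure_preserving_right_interpolation_DH
    {n m p k N : ℕ}
    (J R Q : Matrix (Fin n) (Fin n) ℂ)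
    (hJ : Jᴴ = -J) (hR : R.PosSemidef) (hQ : Q.PosDef)
    (B : Matrix (Fin n) (Fin m) ℂ) (C : Matrix (Fin p) (Fin n) ℂ)
    (s : ℂ) (hs : IsUnit ((s • (1 : Matrix (Fin n) (Fin n) ℂ) - (J - R) * Q)).det)
    (b : Fin m → ℂ)
    (V : Matrix (Fin n) (Fin k) ℂ) (hV : Vᴴ * V = 1)
    (hincl : ∀ ℓ : ℕ, 1 ≤ ℓ → ℓ ≤ N →
      ∃ c : Fin k → ℂ,
        V *ᵥ c = ((s • (1 : Matrix (Fin n) (Fin n) ℂ) - (J - R) * Q)⁻¹ ^ ℓ) *ᵥ (B *ᵥ b))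
    (W : Matrix (Fin n) (Fin k) ℂ) (hW : W = Q * V * (Vᴴ * Q * V)⁻¹)
    (Jk Rk Qk : Matrix (Fin k) (Fin k) ℂ)
    (hJk : Jk = Wᴴ * J * W) (hRk : Rk = Wᴴ * R * W) (hQk : Qk = Vᴴ * Q * V)
    (Bk : Matrix (Fin k) (Fin m) ℂ) (hBk : Bk = Wᴴ * B)
    (Ck : Matrix (Fin p) (Fin k) ℂ) (hCk : Ck = C * W) :
    (Jkᴴ = -Jk ∧ Rk.PosSemidef ∧ Qk.PosDef) ∧
    (IsUnit ((s • (1 : Matrix (Fin k) (Fin k) ℂ) - (Jk - Rk) * Qk)).det →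
      ∀ j : ℕ, j < N →
        (C * Q) *ᵥ (((s • (1 : Matrix (Fin n) (Fin n) ℂ) - (J - R) * Q)⁻¹ ^ (j + 1)) *ᵥ
          (B *ᵥ b)) =
        (Ck * Qk) *ᵥ (((s • (1 : Matrix (Fin k) (Fin k) ℂ) - (Jk - Rk) * Qk)⁻¹ ^ (j + 1)) *ᵥ
          (Bk *ᵥ b))) := by
  subst hJk hRk hQk hBk hCk
  have hM : (Vᴴ * Q * V).PosDef :=
    hQ.conjTranspose_mul_mul_same (mulVec_injective_of_conjTranspose_mul_self_eq_one hV)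
  have hMdet : IsUnit (Vᴴ * Q * V).det := hM.det_pos.ne'.isUnit
  have hWV : Wᴴ * V = 1 := hW ▸ conjTranspose_mul_inv_mul_self hQ.isHermitian hMdet
  have hWM : W * (Vᴴ * Q * V) = Q * V := hW ▸ nonsing_inv_mul_cancel_right _ _ hMdet
  refine ⟨⟨conjTranspose_mul_mul_same_of_conjTranspose_eq_neg hJ W,
    hR.conjTranspose_mul_mul_same W, hM⟩, fun hsk j hj => ?_⟩
  rw [← Matrix.sub_mul, ← Matrix.mul_sub,
    smul_one_sub_mul_mul_eq_mul_smul_one_sub_mul hWV hWM] at hsk ⊢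
  rw [Matrix.mul_assoc C, hWM, ← Matrix.mul_assoc, ← mulVec_mulVec _ (C * Q) V,
    ← mulVec_mulVec b Wᴴ B, mulVec_inv_compression_pow_mulVec hWV hs hsk hincl j hj]
end

section
/- (Structure-preserving left interpolation for DH systems.) Let (J,R,Q) be a DH triple of size n, B ∈ ℂ^{n×m}, C ∈ ℂ^{p×n}, ŝ ∈ ℂ with ŝ·I_n − (J−R)Q invertible, and ĉ ∈ ℂ^p. Let W_k ∈ ℂ^{n×k} have orthonormal columns, suppose Wᴴ_k (J−R)ᴴ W_k is invertible, and suppose ( ĉᴴ C (ŝ·I_n − (J−R)Q)^{−ℓ} )ᴴ lies in the column space of W_k for ℓ = 1, …, N. Set V_k := (J−R)ᴴ W_k (W_kᴴ (J−R)ᴴ W_k)⁻¹, J_k := W_kᴴ J W_k, R_k := W_kᴴ R W_k, Q_k := V_kᴴ Q V_k, B_k := V_kᴴ B, C_k := C V_k. Then: (i) J_k is skew-Hermitian, R_k is Hermitian positive semidefinite, and Q_k is Hermitian positive definite; and (ii) if ŝ·I_k − (J_k−R_k)Q_k is invertible, then ĉᴴ C (ŝ·I_n − (J−R)Q)^{−(ℓ+1)}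 (J−R) B = ĉᴴ C_k (ŝ·I_k − (J_k−R_k)Q_k)^{−(ℓ+1)} (J_k−R_k) B_k for ℓ = 0, …, N−1; equivalently, G(s) := C(sI−(J−R)Q)⁻¹(J−R)B and G_k(s) := C_k(sI−(J_k−R_k)Q_k)⁻¹(J_k−R_k)B_k satisfy ĉᴴ G^{(ℓ)}(ŝ) = ĉᴴ G_k^{(ℓ)}(ŝ) for ℓ = 0, …, N−1. -/
open Matrix
open scoped ComplexOrder

/-!
Write `F = J - R`, `M = ŝ I - F Q` and `u = ĉᴴ C`. The choice of `V` gives `Wᴴ V = 1` and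
`(Wᴴ F W) Vᴴ = Wᴴ F`, so `J_k`, `R_k` are congruences of `J`, `R` by `W`, `Q_k` is a
congruence of `Q` by the injective `V`, and `ŝ I - (J_k - R_k) Q_k = Wᴴ M V =: M_k`.
Any row vector `x` in the row space of `Wᴴ` satisfies `x V Wᴴ = x`; for `x = u M^{-(j+1)}` this gives
`u M^{-(j+1)} V M_k = u M^{-(j+1)} M V = u M^{-j} V`, hence `u M^{-j} V = (u V) M_k^{-j}` and
`u M^{-j} = (u V) M_k^{-j} Wᴴ` for `1 ≤ j ≤ N`. Finally `(J_k - R_k) B_k = Wᴴ F B`.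
-/

namespace Matrix

section Moments

variable {K : Type*} [CommRing K] {ι κ : Type*} [Fintype ι] [Fintype κ] [DecidableEq κ]
  {Wt : Matrix κ ι K} {V : Matrix ι κ K}

lemma vecMul_mul_eq_self_of_eq_vecMul (hWV : Wt * V = 1) {x : ι → K} {d : κ → K}
    (hx : x = d ᵥ* Wt) : x ᵥ* (V * Wt) = x := by
  rw [hx, vecMul_vecMul, ← Matrix.mul_assoc, hWV, Matrix.one_mul]

variable [DecidableEq ι] {M : Matrix ι ι K} {u : ι → K} {N : ℕ}

lemma vecMul_inv_pow_vecMul_eq_s7 (hWV : Wt * V = 1) (hM : IsUnit M.det)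
    (hMk : IsUnit (Wt * M * V).det)
    (hrow : ∀ j, 1 ≤ j → j ≤ N → ∃ d, u ᵥ* M⁻¹ ^ j = d ᵥ* Wt) :
    ∀ j ≤ N, u ᵥ* M⁻¹ ^ j ᵥ* V = u ᵥ* V ᵥ* (Wt * M * V)⁻¹ ^ j := by
  intro j
  induction j with
  | zero => simp
  | succ j ih =>
    intro hjN
    set Mk := Wt * M * V
    obtain ⟨d, hd⟩ := hrow (j + 1) (by omega) hjN
    have hstep : u ᵥ* M⁻¹ ^ (j + 1) ᵥ* V ᵥ* Mk = u ᵥ* M⁻¹ ^ j ᵥ* V := by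
      calc u ᵥ* M⁻¹ ^ (j + 1) ᵥ* V ᵥ* Mk
          = u ᵥ* M⁻¹ ^ (j + 1) ᵥ* (V * Wt) ᵥ* (M * V) := by
            simp only [Mk, vecMul_vecMul, Matrix.mul_assoc]
        _ = u ᵥ* (M⁻¹ ^ j * M⁻¹ * M) ᵥ* V := by
            rw [vecMul_mul_eq_self_of_eq_vecMul hWV hd, pow_succ]
            simp only [vecMul_vecMul, Matrix.mul_assoc]
        _ = u ᵥ* M⁻¹ ^ j ᵥ* V := by rw [nonsing_inv_mul_cancel_right _ _ hM]
    calc u ᵥ* M⁻¹ ^ (j + 1) ᵥ* V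
        = u ᵥ* M⁻¹ ^ (j + 1) ᵥ* V ᵥ* Mk ᵥ* Mk⁻¹ := by
          rw [vecMul_vecMul _ Mk, mul_nonsing_inv _ hMk, vecMul_one]
      _ = u ᵥ* V ᵥ* Mk⁻¹ ^ j ᵥ* Mk⁻¹ := by rw [hstep, ih (by omega)]
      _ = u ᵥ* V ᵥ* Mk⁻¹ ^ (j + 1) := by rw [vecMul_vecMul, pow_succ]

lemma vecMul_inv_pow_eq_s7 (hWV : Wt * V = 1) (hM : IsUnit M.det) (hMk : IsUnit (Wt * M * V).det)
    (hrow : ∀ j, 1 ≤ j → j ≤ N → ∃ d, u ᵥ* M⁻¹ ^ j = d ᵥ* Wt) {j : ℕ} (hj : 1 ≤ j)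
    (hjN : j ≤ N) : u ᵥ* M⁻¹ ^ j = u ᵥ* V ᵥ* (Wt * M * V)⁻¹ ^ j ᵥ* Wt := by
  obtain ⟨d, hd⟩ := hrow j hj hjN
  rw [← vecMul_inv_pow_vecMul_eq_s7 hWV hM hMk hrow j hjN, vecMul_vecMul _ V,
    vecMul_mul_eq_self_of_eq_vecMul hWV hd]

lemma smul_one_sub_mul_eq_mul_mul {Fk : Matrix κ κ K} {Vt : Matrix κ ι K} {F : Matrix ι ι K}
    (hWV : Wt * V = 1) (hF : Fk * Vt = Wt * F) (s : K) (Q : Matrix ι ι K) :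
    s • 1 - Fk * (Vt * Q * V) = Wt * (s • 1 - F * Q) * V := by
  rw [Matrix.mul_sub, Matrix.sub_mul, Matrix.mul_smul, Matrix.mul_one, Matrix.smul_mul, hWV,
    ← Matrix.mul_assoc, ← Matrix.mul_assoc, hF]
  simp only [Matrix.mul_assoc]

end Moments

section PetrovGalerkin

variable {K : Type*} [CommRing K] [StarRing K] {ι κ : Type*} [Fintype ι]

lemma conjTranspose_mul_mul_same_of_conjTranspose_eq_neg_s7 {J : Matrix ι ι K} (hJ : Jᴴ = -J)
    (A : Matrix ι κ K) : (Aᴴ * J * A)ᴴ = -(Aᴴ * J * A) := by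
  simp [conjTranspose_mul, hJ, Matrix.mul_assoc]

variable [Fintype κ] [DecidableEq κ]

noncomputable def petrovGalerkinBasis (F : Matrix ι ι K) (W : Matrix ι κ K) : Matrix ι κ K :=
  Fᴴ * W * (Wᴴ * Fᴴ * W)⁻¹

variable {F : Matrix ι ι K} {W : Matrix ι κ K}

lemma conjTranspose_mul_petrovGalerkinBasis (h : IsUnit (Wᴴ * Fᴴ * W).det) :
    Wᴴ * petrovGalerkinBasis F W = 1 := by
  rw [petrovGalerkinBasis, ← Matrix.mul_assoc, ← Matrix.mul_assoc]
  exact mul_nonsing_inv _ h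

lemma mul_conjTranspose_petrovGalerkinBasis (h : IsUnit (Wᴴ * Fᴴ * W).det) :
    Wᴴ * F * W * (petrovGalerkinBasis F W)ᴴ = Wᴴ * F := by
  have hself : (Wᴴ * Fᴴ * W)ᴴ = Wᴴ * F * W := by simp [conjTranspose_mul, Matrix.mul_assoc]
  have hdet : IsUnit (Wᴴ * F * W).det := by
    rw [← hself, det_conjTranspose]
    exact h.star
  rw [petrovGalerkinBasis, conjTranspose_mul, conjTranspose_nonsing_inv, hself, conjTranspose_mul,
    conjTranspose_conjTranspose, ← Matrix.mul_assoc, mul_nonsing_inv _ hdet, Matrix.one_mul]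

end PetrovGalerkin

end Matrix

theorem structure_preserving_left_interpolation_DH_general
    {n m p k N : ℕ}
    (J R Q : Matrix (Fin n) (Fin n) ℂ)
    (hJ : Jᴴ = -J) (hR : R.PosSemidef) (hQ : Q.PosDef)
    (B : Matrix (Fin n) (Fin m) ℂ) (C : Matrix (Fin p) (Fin n) ℂ)
    (s : ℂ) (hs : IsUnit ((s • (1 : Matrix (Fin n) (Fin n) ℂ) - (J - R) * Q)).det)
    (c : Fin p → ℂ)
    (W : Matrix (Fin n) (Fin k) ℂ)
    (hWJR : IsUnit (Wᴴ * (J - R)ᴴ * W).det)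
    (hincl : ∀ ℓ : ℕ, 1 ≤ ℓ → ℓ ≤ N →
      ∃ d : Fin k → ℂ,
        W *ᵥ d =
          star ((star c) ᵥ* (C * ((s • (1 : Matrix (Fin n) (Fin n) ℂ) - (J - R) * Q)⁻¹ ^ ℓ))))
    (V : Matrix (Fin n) (Fin k) ℂ) (hV : V = (J - R)ᴴ * W * (Wᴴ * (J - R)ᴴ * W)⁻¹)
    (Jk Rk Qk : Matrix (Fin k) (Fin k) ℂ)
    (hJk : Jk = Wᴴ * J * W) (hRk : Rk = Wᴴ * R * W) (hQk : Qk = Vᴴ * Q * V)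
    (Bk : Matrix (Fin k) (Fin m) ℂ) (hBk : Bk = Vᴴ * B)
    (Ck : Matrix (Fin p) (Fin k) ℂ) (hCk : Ck = C * V) :
    (Jkᴴ = -Jk ∧ Rk.PosSemidef ∧ Qk.PosDef) ∧
    (IsUnit ((s • (1 : Matrix (Fin k) (Fin k) ℂ) - (Jk - Rk) * Qk)).det →
      ∀ ℓ : ℕ, ℓ < N →
        (star c) ᵥ* (C * ((s • (1 : Matrix (Fin n) (Fin n) ℂ) - (J - R) * Q)⁻¹ ^ (ℓ + 1))
          * ((J - R) * B)) =
        (star c) ᵥ* (Ck * ((s • (1 : Matrix (Fin k) (Fin k) ℂ) - (Jk - Rk) * Qk)⁻¹ ^ (ℓ + 1))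
          * ((Jk - Rk) * Bk))) := by
  replace hV : V = petrovGalerkinBasis (J - R) W := hV
  have hWV : Wᴴ * V = 1 := hV ▸ conjTranspose_mul_petrovGalerkinBasis hWJR
  have hFk : (Jk - Rk) * Vᴴ = Wᴴ * (J - R) := by
    rw [hJk, hRk, ← Matrix.sub_mul, ← Matrix.mul_sub, hV,
      mul_conjTranspose_petrovGalerkinBasis hWJR]
  have hV_inj : Function.Injective V.mulVec := fun x y hxy => by
    simpa [mulVec_mulVec, hWV] using congrArg (Wᴴ *ᵥ ·) hxy
  refine ⟨⟨hJk ▸ conjTranspose_mul_mul_same_of_conjTranspose_eq_neg_s7 hJ W,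
    hRk ▸ hR.conjTranspose_mul_mul_same W, hQk ▸ hQ.conjTranspose_mul_mul_same hV_inj⟩, ?_⟩
  intro hMk ℓ hℓ
  rw [hQk, smul_one_sub_mul_eq_mul_mul hWV hFk] at hMk ⊢
  have hrow : ∀ j, 1 ≤ j → j ≤ N → ∃ d, star c ᵥ* C ᵥ*
      (s • (1 : Matrix (Fin n) (Fin n) ℂ) - (J - R) * Q)⁻¹ ^ j = d ᵥ* Wᴴ := fun j hj hjN => by
    obtain ⟨d, hd⟩ := hincl j hj hjN
    exact ⟨star d, by rw [← star_mulVec, hd, star_star, vecMul_vecMul]⟩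
  have hmoment := vecMul_inv_pow_eq_s7 hWV hs hMk hrow (j := ℓ + 1) (by omega) (by omega)
  rw [hCk, hBk, ← Matrix.mul_assoc (Jk - Rk), hFk]
  simp only [← vecMul_vecMul] at hmoment ⊢
  rw [hmoment]

/-- Structure-preserving left tangential interpolation for DH systems: the Petrov–Galerkin
reduction with `V_k = (J−R)ᴴ W_k (W_kᴴ (J−R)ᴴ W_k)⁻¹` yields a reduced DH triple whose
transfer function Hermite-interpolates `G(s) = C(sI − (J−R)Q)⁻¹(J−R)B` in the left
direction `ĉ` at `ŝ`. -/
theorem structure_preserving_left_interpolation_DH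
    {n m p k N : ℕ}
    (J R Q : Matrix (Fin n) (Fin n) ℂ)
    (hJ : Jᴴ = -J) (hR : R.PosSemidef) (hQ : Q.PosDef)
    (B : Matrix (Fin n) (Fin m) ℂ) (C : Matrix (Fin p) (Fin n) ℂ)
    (s : ℂ) (hs : IsUnit ((s • (1 : Matrix (Fin n) (Fin n) ℂ) - (J - R) * Q)).det)
    (c : Fin p → ℂ)
    (W : Matrix (Fin n) (Fin k) ℂ) (hWorth : Wᴴ * W = 1)
    (hWJR : IsUnit (Wᴴ * (J - R)ᴴ * W).det)
    (hincl : ∀ ℓ : ℕ, 1 ≤ ℓ → ℓ ≤ N →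
      ∃ d : Fin k → ℂ,
        W *ᵥ d =
          star ((star c) ᵥ* (C * ((s • (1 : Matrix (Fin n) (Fin n) ℂ) - (J - R) * Q)⁻¹ ^ ℓ))))
    (V : Matrix (Fin n) (Fin k) ℂ) (hV : V = (J - R)ᴴ * W * (Wᴴ * (J - R)ᴴ * W)⁻¹)
    (Jk Rk Qk : Matrix (Fin k) (Fin k) ℂ)
    (hJk : Jk = Wᴴ * J * W) (hRk : Rk = Wᴴ * R * W) (hQk : Qk = Vᴴ * Q * V)
    (Bk : Matrix (Fin k) (Fin m) ℂ) (hBk : Bk = Vᴴ * B)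
    (Ck : Matrix (Fin p) (Fin k) ℂ) (hCk : Ck = C * V) :
    (Jkᴴ = -Jk ∧ Rk.PosSemidef ∧ Qk.PosDef) ∧
    (IsUnit ((s • (1 : Matrix (Fin k) (Fin k) ℂ) - (Jk - Rk) * Qk)).det →
      ∀ ℓ : ℕ, ℓ < N →
        (star c) ᵥ* (C * ((s • (1 : Matrix (Fin n) (Fin n) ℂ) - (J - R) * Q)⁻¹ ^ (ℓ + 1))
          * ((J - R) * B)) =
        (star c) ᵥ* (Ck * ((s • (1 : Matrix (Fin k) (Fin k) ℂ) - (Jk - Rk) * Qk)⁻¹ ^ (ℓ + 1))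
          * ((Jk - Rk) * Bk))) :=
  structure_preserving_left_interpolation_DH_general J R Q hJ hR hQ B C s hs c W hWJR hincl V hV Jk
    Rk Qk hJk hRk hQk Bk hBk Ck hCk
end

section
/- (Basis independence of the reduced structured backward error.) Let (J,R,Q) be a DH triple of size n and B ∈ ℂ^{n×m}. Let V, Ṽ ∈ ℂ^{n×k} each have orthonormal columns and have the same column space, and set W := Q V (VᴴQV)⁻¹ and W̃ := Q Ṽ (ṼᴴQṼ)⁻¹. For a pair (V,W) and ω ∈ ℝ, define the set E_{V,W}(ω) := { ‖Δ‖₂ : Δ ∈ ℂ^{m×m} Hermitian such that iω is an eigenvalue of (WᴴJW − WᴴRW)(VᴴQV) − (WᴴB) Δ (WᴴB)ᴴ (VᴴQV) }. Then for every ω ∈ ℝ and every Hermitian Δ ∈ ℂ^{m×m}, iω is an eigenvalue of the matrix built from (V,W) if and only if it is an eigenvalue of the matrix built from (Ṽ,W̃); in particular E_{V,W}(ω) = E_{Ṽ,W̃}(ω) and inf E_{V,W}(ω) = inf E_{Ṽ,W̃}(ω). -/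
open Matrix
open scoped ComplexOrder

/-- The reduced perturbed DH matrix built from a basis pair `(V, W)`, `W = QV(VᴴQV)⁻¹`,
with Hermitian perturbation `Δ` of the dissipation part. -/
noncomputable def reducedPerturbed {n m k : ℕ}
    (J R Q : Matrix (Fin n) (Fin n) ℂ) (B : Matrix (Fin n) (Fin m) ℂ)
    (V W : Matrix (Fin n) (Fin k) ℂ) (Δ : Matrix (Fin m) (Fin m) ℂ) :
    Matrix (Fin k) (Fin k) ℂ :=
  (Wᴴ * J * W - Wᴴ * R * W) * (Vᴴ * Q * V) - (Wᴴ * B) * Δ * (Wᴴ * B)ᴴ * (Vᴴ * Q * V)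

/-- The set of spectral norms of Hermitian perturbations `Δ` moving an eigenvalue of the
reduced perturbed DH matrix onto `iω`. -/
noncomputable def Eset {n m k : ℕ}
    (J R Q : Matrix (Fin n) (Fin n) ℂ) (B : Matrix (Fin n) (Fin m) ℂ)
    (V W : Matrix (Fin n) (Fin k) ℂ) (ω : ℝ) : Set ℝ :=
  {x | ∃ Δ : Matrix (Fin m) (Fin m) ℂ, Δᴴ = Δ ∧ sNorm Δ = x ∧
    (reducedPerturbed J R Q B V W Δ -
      (Complex.I * (ω : ℂ)) • (1 : Matrix (Fin k) (Fin k) ℂ)).det = 0}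

/-! `V Vᴴ` is the orthogonal projector onto the common column space, so `U := Vᴴ Ṽ` satisfies
`Ṽ = V U` and is unitary. Then `W̃ = W U`, so if `M` is the reduced matrix built from `(V, W)`,
the one built from `(Ṽ, W̃)` is the unitary similarity `Uᴴ M U`, and `M - iω I` has the same
determinant for both pairs. -/

namespace Matrix

variable {𝕜 : Type*} [CommRing 𝕜] [StarRing 𝕜] {ι κ : Type*} [Fintype ι] [Fintype κ]
  [DecidableEq κ]

theorem mul_conjTranspose_mul_of_range_le {V Vt : Matrix ι κ 𝕜} (hV : Vᴴ * V = 1)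
    (hrange : LinearMap.range Vt.mulVecLin ≤ LinearMap.range V.mulVecLin) :
    V * (Vᴴ * Vt) = Vt := by
  refine ext_iff_mulVec.mpr fun v => ?_
  obtain ⟨x, hx⟩ := hrange ⟨v, rfl⟩
  rw [mulVecLin_apply, mulVecLin_apply] at hx
  rw [← mulVec_mulVec, ← mulVec_mulVec, ← hx, mulVec_mulVec (N := V), hV, one_mulVec]

theorem exists_mem_unitaryGroup_mul_eq_of_range_le {V Vt : Matrix ι κ 𝕜}
    (hV : Vᴴ * V = 1) (hVt : Vtᴴ * Vt = 1)
    (hrange : LinearMap.range Vt.mulVecLin ≤ LinearMap.range V.mulVecLin) :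
    ∃ U ∈ unitaryGroup κ 𝕜, V * U = Vt := by
  have hVU := mul_conjTranspose_mul_of_range_le hV hrange
  refine ⟨Vᴴ * Vt, ?_, hVU⟩
  rw [mem_unitaryGroup_iff', star_eq_conjTranspose, conjTranspose_mul,
    conjTranspose_conjTranspose, Matrix.mul_assoc, hVU, hVt]

theorem mul_mul_inv_conjTranspose_mul_mul_of_mem_unitaryGroup {n : Type*} [Fintype n]
    (Q : Matrix n n 𝕜) (V : Matrix n κ 𝕜) {U : Matrix κ κ 𝕜} (hU : U ∈ unitaryGroup κ 𝕜) :
    Q * (V * U) * ((V * U)ᴴ * Q * (V * U))⁻¹ = Q * V * (Vᴴ * Q * V)⁻¹ * U := by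
  have hUU : U * Uᴴ = 1 := mem_unitaryGroup_iff.mp hU
  have hinv : ((V * U)ᴴ * Q * (V * U))⁻¹ = Uᴴ * (Vᴴ * Q * V)⁻¹ * U := by
    rw [conjTranspose_mul, show Uᴴ * Vᴴ * Q * (V * U) = Uᴴ * (Vᴴ * Q * V) * U by
        simp only [Matrix.mul_assoc], mul_inv_rev, mul_inv_rev,
      inv_eq_left_inv (mem_unitaryGroup_iff'.mp hU), inv_eq_left_inv hUU, star_eq_conjTranspose]
    simp only [Matrix.mul_assoc]
  rw [hinv]
  simp only [← Matrix.mul_assoc]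
  rw [Matrix.mul_assoc (Q * V) U, hUU, Matrix.mul_one]

end Matrix

section UnitaryChangeOfBasis

variable {n m k : ℕ} (J R Q : Matrix (Fin n) (Fin n) ℂ) (B : Matrix (Fin n) (Fin m) ℂ)
  (V W : Matrix (Fin n) (Fin k) ℂ) {U : Matrix (Fin k) (Fin k) ℂ}

theorem reducedPerturbed_mul_of_mem_unitaryGroup (hU : U ∈ unitaryGroup (Fin k) ℂ)
    (Δ : Matrix (Fin m) (Fin m) ℂ) :
    reducedPerturbed J R Q B (V * U) (W * U) Δ = Uᴴ * reducedPerturbed J R Q B V W Δ * U := by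
  have hUU : ∀ X : Matrix (Fin k) (Fin k) ℂ, U * (Uᴴ * X) = X := fun X => by
    rw [← Matrix.mul_assoc, ← star_eq_conjTranspose, mem_unitaryGroup_iff.mp hU, Matrix.one_mul]
  simp only [reducedPerturbed, conjTranspose_mul, conjTranspose_conjTranspose, Matrix.mul_sub,
    Matrix.sub_mul, Matrix.mul_assoc, hUU]

theorem det_reducedPerturbed_mul_sub_smul_of_mem_unitaryGroup
    (hU : U ∈ unitaryGroup (Fin k) ℂ) (Δ : Matrix (Fin m) (Fin m) ℂ) (z : ℂ) :
    (reducedPerturbed J R Q B (V * U) (W * U) Δ - z • 1).det =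
      (reducedPerturbed J R Q B V W Δ - z • 1).det := by
  have hUHU : Uᴴ * U = 1 := mem_unitaryGroup_iff'.mp hU
  rw [reducedPerturbed_mul_of_mem_unitaryGroup J R Q B V W hU, ← det_conj_of_mul_eq_one hUHU
    (mem_unitaryGroup_iff.mp hU) (N := reducedPerturbed J R Q B V W Δ - z • 1), Matrix.mul_sub,
    Matrix.sub_mul, Matrix.mul_smul, Matrix.smul_mul, Matrix.mul_one, hUHU]

theorem Eset_mul_of_mem_unitaryGroup (hU : U ∈ unitaryGroup (Fin k) ℂ) (ω : ℝ) :
    Eset J R Q B (V * U) (W * U) ω = Eset J R Q B V W ω := by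
  simp only [Eset, det_reducedPerturbed_mul_sub_smul_of_mem_unitaryGroup J R Q B V W hU]

end UnitaryChangeOfBasis

theorem reduced_backward_error_basis_independent_general
    {n m k : ℕ}
    (J R Q : Matrix (Fin n) (Fin n) ℂ)
    (B : Matrix (Fin n) (Fin m) ℂ)
    (V Vt : Matrix (Fin n) (Fin k) ℂ)
    (hV : Vᴴ * V = 1) (hVt : Vtᴴ * Vt = 1)
    (hrange : LinearMap.range V.mulVecLin = LinearMap.range Vt.mulVecLin)
    (W Wt : Matrix (Fin n) (Fin k) ℂ)
    (hW : W = Q * V * (Vᴴ * Q * V)⁻¹) (hWt : Wt = Q * Vt * (Vtᴴ * Q * Vt)⁻¹) :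
    (∀ ω : ℝ, ∀ Δ : Matrix (Fin m) (Fin m) ℂ, Δᴴ = Δ →
      ((reducedPerturbed J R Q B V W Δ -
          (Complex.I * (ω : ℂ)) • (1 : Matrix (Fin k) (Fin k) ℂ)).det = 0 ↔
       (reducedPerturbed J R Q B Vt Wt Δ -
          (Complex.I * (ω : ℂ)) • (1 : Matrix (Fin k) (Fin k) ℂ)).det = 0)) ∧
    (∀ ω : ℝ, Eset J R Q B V W ω = Eset J R Q B Vt Wt ω ∧
      sInf (Eset J R Q B V W ω) = sInf (Eset J R Q B Vt Wt ω)) := by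
  obtain ⟨U, hU, rfl⟩ := exists_mem_unitaryGroup_mul_eq_of_range_le hV hVt hrange.ge
  rw [mul_mul_inv_conjTranspose_mul_mul_of_mem_unitaryGroup Q V hU, ← hW] at hWt
  subst hWt
  refine ⟨fun ω Δ _ => ?_, fun ω => ?_⟩
  · rw [det_reducedPerturbed_mul_sub_smul_of_mem_unitaryGroup J R Q B V W hU]
  · rw [Eset_mul_of_mem_unitaryGroup J R Q B V W hU]
    exact ⟨rfl, rfl⟩

/-- Basis independence of the reduced structured backward error: two orthonormal bases of the
same subspace yield the same eigenvalue condition, the same sets `E`, and the same infima. -/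
theorem reduced_backward_error_basis_independent
    {n m k : ℕ}
    (J R Q : Matrix (Fin n) (Fin n) ℂ)
    (hJ : Jᴴ = -J) (hR : R.PosSemidef) (hQ : Q.PosDef)
    (B : Matrix (Fin n) (Fin m) ℂ)
    (V Vt : Matrix (Fin n) (Fin k) ℂ)
    (hV : Vᴴ * V = 1) (hVt : Vtᴴ * Vt = 1)
    (hrange : LinearMap.range V.mulVecLin = LinearMap.range Vt.mulVecLin)
    (W Wt : Matrix (Fin n) (Fin k) ℂ)
    (hW : W = Q * V * (Vᴴ * Q * V)⁻¹) (hWt : Wt = Q * Vt * (Vtᴴ * Q * Vt)⁻¹) :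
    (∀ ω : ℝ, ∀ Δ : Matrix (Fin m) (Fin m) ℂ, Δᴴ = Δ →
      ((reducedPerturbed J R Q B V W Δ -
          (Complex.I * (ω : ℂ)) • (1 : Matrix (Fin k) (Fin k) ℂ)).det = 0 ↔
       (reducedPerturbed J R Q B Vt Wt Δ -
          (Complex.I * (ω : ℂ)) • (1 : Matrix (Fin k) (Fin k) ℂ)).det = 0)) ∧
    (∀ ω : ℝ, Eset J R Q B V W ω = Eset J R Q B Vt Wt ω ∧
      sInf (Eset J R Q B V W ω) = sInf (Eset J R Q B Vt Wt ω)) :=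
  reduced_backward_error_basis_independent_general J R Q B V Vt hV hVt hrange W Wt hW hWt
end

section
/- Let (J,R,Q) be a DH triple of size n, B ∈ ℂ^{n×m}, and let V_k ∈ ℂ^{n×k} have orthonormal columns. Set W_k := Q V_k (V_kᴴ Q V_k)⁻¹, J_k := W_kᴴ J W_k, R_k := W_kᴴ R W_k, Q_k := V_kᴴ Q V_k, B_k := W_kᴴ B, and for λ ∈ ℂ let W(λ) := (J−R)Q − λ·I_n and W_k(λ) := (J_k−R_k)Q_k − λ·I_k. Let λ̂ ∈ ℂ be such that W(λ̂) and W_k(λ̂) are invertible. If every column of W(λ̂)⁻¹ B lies in the column space of V_k, then Bᴴ Q W(λ̂)⁻¹ B = B_kᴴ Q_k W_k(λ̂)⁻¹ B_k. -/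
/-!
This is exact interpolation by a Petrov–Galerkin projection. With `W := Q V (Vᴴ Q V)⁻¹` we have
`Wᴴ V = 1` and `W Q_k = Q V`, so the compression `Wᴴ W(λ̂) V` of the pencil is exactly `W_k(λ̂)`.
If `W(λ̂)⁻¹ B = V Z`, applying `Wᴴ W(λ̂)` gives `W_k(λ̂) Z = B_k`, hence `W(λ̂)⁻¹ B = V W_k(λ̂)⁻¹ B_k`,
and `Bᴴ Q V = Bᴴ W Q_k = B_kᴴ Q_k` finishes the computation.
-/

open Matrix
open scoped ComplexOrder

namespace Matrix

variable {ι κ μ R : Type*} [Fintype ι] [Fintype κ] [DecidableEq κ] [CommRing R]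

theorem nonsing_inv_mul_eq_galerkin [DecidableEq ι] {A : Matrix ι ι R} {B : Matrix ι μ R}
    {V : Matrix ι κ R} {L : Matrix κ ι R} {Z : Matrix κ μ R} (hA : IsUnit A.det)
    (hLAV : IsUnit (L * A * V).det) (hZ : V * Z = A⁻¹ * B) :
    A⁻¹ * B = V * (L * A * V)⁻¹ * (L * B) := by
  have hAZ : L * A * V * Z = L * B := by
    rw [Matrix.mul_assoc, hZ, Matrix.mul_assoc L, ← Matrix.mul_assoc A, mul_nonsing_inv _ hA,
      Matrix.one_mul]
  have hZ' : Z = (L * A * V)⁻¹ * (L * B) := by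
    rw [← hAZ, ← Matrix.mul_assoc, nonsing_inv_mul _ hLAV, Matrix.one_mul]
  rw [← hZ, hZ', Matrix.mul_assoc V]

theorem mul_sub_smul_mul_eq_of_mul_eq [DecidableEq ι] {L : Matrix κ ι R} {V W : Matrix ι κ R}
    {Q : Matrix ι ι R} {Qk : Matrix κ κ R} (hLV : L * V = 1) (hWQk : W * Qk = Q * V)
    (M : Matrix ι ι R) (c : R) :
    L * (M * Q - c • 1) * V = L * M * W * Qk - c • 1 := by
  simp only [Matrix.mul_sub, Matrix.sub_mul, Matrix.mul_smul, Matrix.smul_mul, Matrix.mul_one,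
    Matrix.mul_assoc, hWQk, hLV]

theorem conjTranspose_mul_mul_nonsing_inv_mul [StarRing R] {Q : Matrix ι ι R}
    {V : Matrix ι κ R} (hQk : IsUnit (Vᴴ * Q * V).det) :
    (Q * V * (Vᴴ * Q * V)⁻¹)ᴴ * V = 1 := by
  have hVW : Vᴴ * (Q * V * (Vᴴ * Q * V)⁻¹) = 1 := by
    rw [← Matrix.mul_assoc, ← Matrix.mul_assoc, mul_nonsing_inv _ hQk]
  rw [← conjTranspose_conjTranspose V, ← conjTranspose_mul, conjTranspose_conjTranspose, hVW,
    conjTranspose_one]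

theorem PosDef.isUnit_det_conjTranspose_mul_mul {K : Type*} [Field K] [PartialOrder K]
    [StarRing K] {Q : Matrix ι ι K} {V : Matrix ι κ K}
    (hQ : Q.PosDef) (hV : Vᴴ * V = 1) : IsUnit (Vᴴ * Q * V).det := by
  have hVinj : Function.Injective V.mulVec :=
    Function.LeftInverse.injective (g := Vᴴ.mulVec) fun x => by
      rw [mulVec_mulVec, hV, one_mulVec]
  exact (isUnit_iff_isUnit_det _).mp (hQ.conjTranspose_mul_mul_same hVinj).isUnit

end Matrix

theorem interpolation_BQWinvB_general
    {n m k : ℕ}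
    (J R Q : Matrix (Fin n) (Fin n) ℂ)
    (hQ : Q.PosDef)
    (B : Matrix (Fin n) (Fin m) ℂ)
    (V : Matrix (Fin n) (Fin k) ℂ) (hV : Vᴴ * V = 1)
    (W : Matrix (Fin n) (Fin k) ℂ) (hW : W = Q * V * (Vᴴ * Q * V)⁻¹)
    (Jk Rk Qk : Matrix (Fin k) (Fin k) ℂ)
    (hJk : Jk = Wᴴ * J * W) (hRk : Rk = Wᴴ * R * W) (hQk : Qk = Vᴴ * Q * V)
    (Bk : Matrix (Fin k) (Fin m) ℂ) (hBk : Bk = Wᴴ * B)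
    (lam : ℂ)
    (hWinv : IsUnit ((J - R) * Q - lam • (1 : Matrix (Fin n) (Fin n) ℂ)).det)
    (hWkinv : IsUnit ((Jk - Rk) * Qk - lam • (1 : Matrix (Fin k) (Fin k) ℂ)).det)
    (hincl : ∃ Z : Matrix (Fin k) (Fin m) ℂ,
      V * Z = ((J - R) * Q - lam • (1 : Matrix (Fin n) (Fin n) ℂ))⁻¹ * B) :
    Bᴴ * Q * ((J - R) * Q - lam • (1 : Matrix (Fin n) (Fin n) ℂ))⁻¹ * B =
    Bkᴴ * Qk * ((Jk - Rk) * Qk - lam • (1 : Matrix (Fin k) (Fin k) ℂ))⁻¹ * Bk := by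
  obtain ⟨Z, hZ⟩ := hincl
  have hQkdet : IsUnit (Vᴴ * Q * V).det := hQ.isUnit_det_conjTranspose_mul_mul hV
  have hWV : Wᴴ * V = 1 := by rw [hW]; exact conjTranspose_mul_mul_nonsing_inv_mul hQkdet
  have hWQk : W * Qk = Q * V := by
    rw [hW, hQk]; exact nonsing_inv_mul_cancel_right _ _ hQkdet
  have hcompress : Wᴴ * ((J - R) * Q - lam • 1) * V = (Jk - Rk) * Qk - lam • 1 := by
    rw [mul_sub_smul_mul_eq_of_mul_eq hWV hWQk, hJk, hRk, ← Matrix.sub_mul, ← Matrix.mul_sub]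
  have hBkQk : Bkᴴ * Qk = Bᴴ * Q * V := by
    rw [hBk, conjTranspose_mul, conjTranspose_conjTranspose, Matrix.mul_assoc, hWQk,
      Matrix.mul_assoc]
  rw [Matrix.mul_assoc _ _ B, nonsing_inv_mul_eq_galerkin hWinv (by rwa [hcompress]) hZ,
    hcompress, ← hBk, hBkQk, ← Matrix.mul_assoc, ← Matrix.mul_assoc]

/-- If the columns of `W(λ̂)⁻¹B` lie in the column space of `V_k`, then the structure-preserving
projection exactly matches the matrix function `Bᴴ Q W(λ)⁻¹ B` at `λ̂`. -/
theorem interpolation_BQWinvB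
    {n m k : ℕ}
    (J R Q : Matrix (Fin n) (Fin n) ℂ)
    (hJ : Jᴴ = -J) (hR : R.PosSemidef) (hQ : Q.PosDef)
    (B : Matrix (Fin n) (Fin m) ℂ)
    (V : Matrix (Fin n) (Fin k) ℂ) (hV : Vᴴ * V = 1)
    (W : Matrix (Fin n) (Fin k) ℂ) (hW : W = Q * V * (Vᴴ * Q * V)⁻¹)
    (Jk Rk Qk : Matrix (Fin k) (Fin k) ℂ)
    (hJk : Jk = Wᴴ * J * W) (hRk : Rk = Wᴴ * R * W) (hQk : Qk = Vᴴ * Q * V)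
    (Bk : Matrix (Fin k) (Fin m) ℂ) (hBk : Bk = Wᴴ * B)
    (lam : ℂ)
    (hWinv : IsUnit ((J - R) * Q - lam • (1 : Matrix (Fin n) (Fin n) ℂ)).det)
    (hWkinv : IsUnit ((Jk - Rk) * Qk - lam • (1 : Matrix (Fin k) (Fin k) ℂ)).det)
    (hincl : ∃ Z : Matrix (Fin k) (Fin m) ℂ,
      V * Z = ((J - R) * Q - lam • (1 : Matrix (Fin n) (Fin n) ℂ))⁻¹ * B) :
    Bᴴ * Q * ((J - R) * Q - lam • (1 : Matrix (Fin n) (Fin n) ℂ))⁻¹ * B =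
    Bkᴴ * Qk * ((Jk - Rk) * Qk - lam • (1 : Matrix (Fin k) (Fin k) ℂ))⁻¹ * Bk :=
  interpolation_BQWinvB_general J R Q hQ B V hV W hW Jk Rk Qk hJk hRk hQk Bk hBk lam hWinv hWkinv
    hincl
end

section
/- Let (J,R,Q) be a DH triple of size n, B ∈ ℂ^{n×m}, and let λ̂ ∈ ℂ be such that W(λ̂) := (J−R)Q − λ̂·I_n is invertible. Let V_k ∈ ℂ^{n×k} have orthonormal columns with V_k = [Ṽ_k V̂_k] partitioned so that the columns of the first block Ṽ_k form an orthonormal basis of the column space of W(λ̂)⁻¹ B. Set W_k := Q V_k (V_kᴴ Q V_k)⁻¹, J_k := W_kᴴ J W_k, R_k := W_kᴴ R W_k, Q_k := V_kᴴ Q V_k, B_k := W_kᴴ B, W_k(λ) := (J_k−R_k)Q_k − λ·I_k, and assume W_k(λ̂) is invertible. If every column of W(λ̂)⁻¹ B and every column of W(λ̂)⁻² B lies in the column space of V_k, then Bᴴ Q W(λ̂)⁻² B = B_kᴴ Q_k W_k(λ̂)⁻² B_k. -/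
/-!
With `W(λ) = (J - R)Q - λI`, the reduced pencil is the Petrov–Galerkin projection
`W_k(λ) = W_kᴴ W(λ) V_k`, where `W_kᴴ V_k = 1` and `W_k Q_k = Q V_k`. If `V_k Z = W(λ̂)⁻¹ X` then
applying `W_kᴴ W(λ̂)` gives `W_k(λ̂) Z = W_kᴴ X`; used once with `X = B` and once with
`X = V_k Z`, this yields `V_k W_k(λ̂)⁻² B_k = W(λ̂)⁻² B`, and `Bᴴ Q V_k = B_kᴴ Q_k` finishes.
-/

open Matrix
open scoped ComplexOrder

section PetrovGalerkin

variable {α : Type*} [CommRing α] {ι κ μ : Type*} [Fintype ι]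

lemma mul_eq_of_projected_mul_eq_inv_mul [DecidableEq ι] [Fintype κ] {M : Matrix ι ι α}
    {P : Matrix κ ι α} {V : Matrix ι κ α} {X : Matrix ι μ α} {Z : Matrix κ μ α}
    (hM : IsUnit M.det) (hZ : V * Z = M⁻¹ * X) : (P * M * V) * Z = P * X := by
  rw [Matrix.mul_assoc, hZ, Matrix.mul_assoc, ← Matrix.mul_assoc M, mul_nonsing_inv _ hM,
    Matrix.one_mul]

lemma eq_projected_inv_sq_mul_of_mul_eq_inv_sq_mul [DecidableEq ι] [Fintype κ] [DecidableEq κ]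
    {M : Matrix ι ι α} {P : Matrix κ ι α} {V : Matrix ι κ α} {X : Matrix ι μ α}
    {Z Y : Matrix κ μ α} (hPV : P * V = 1) (hM : IsUnit M.det) (hMk : IsUnit (P * M * V).det)
    (hZ : V * Z = M⁻¹ * X) (hY : V * Y = M⁻¹ ^ 2 * X) :
    Y = (P * M * V)⁻¹ ^ 2 * (P * X) := by
  have hY' : V * Y = M⁻¹ * (V * Z) := by rw [hY, hZ, sq, Matrix.mul_assoc]
  have hZk : (P * M * V) * Z = P * X := mul_eq_of_projected_mul_eq_inv_mul hM hZ
  have hYk : (P * M * V) * Y = Z := by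
    rw [mul_eq_of_projected_mul_eq_inv_mul hM hY', ← Matrix.mul_assoc, hPV, Matrix.one_mul]
  rw [sq, Matrix.mul_assoc, ← hZk, nonsing_inv_mul_cancel_left _ _ hMk, ← hYk,
    nonsing_inv_mul_cancel_left _ _ hMk]

lemma mul_sub_smul_one_mul [DecidableEq ι] [DecidableEq κ] {P : Matrix κ ι α}
    {V : Matrix ι κ α} (hPV : P * V = 1) (A : Matrix ι ι α) (c : α) :
    P * (A - c • 1) * V = P * A * V - c • 1 := by
  rw [Matrix.mul_sub, Matrix.sub_mul, Matrix.mul_smul, Matrix.mul_one, Matrix.smul_mul, hPV]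

variable [StarRing α] [Fintype κ] {Q : Matrix ι ι α} {V : Matrix ι κ α}

lemma conjTranspose_mul_mul_nonsing_inv_mul [DecidableEq κ] (hQ : Q.IsHermitian)
    (hQV : IsUnit (Vᴴ * Q * V).det) : (Q * V * (Vᴴ * Q * V)⁻¹)ᴴ * V = 1 := by
  have hQk : (Vᴴ * Q * V)ᴴ = Vᴴ * Q * V := (isHermitian_conjTranspose_mul_mul V hQ).eq
  rw [conjTranspose_mul, conjTranspose_nonsing_inv, hQk, conjTranspose_mul, hQ.eq,
    Matrix.mul_assoc, nonsing_inv_mul _ hQV]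

lemma conjTranspose_mul_mul_mul_sub_smul_one [DecidableEq ι] [DecidableEq κ]
    {W : Matrix ι κ α} {Qk : Matrix κ κ α} (hWQ : W * Qk = Q * V) (hWV : Wᴴ * V = 1)
    (A : Matrix ι ι α) (c : α) : Wᴴ * A * W * Qk - c • 1 = Wᴴ * (A * Q - c • 1) * V := by
  rw [mul_sub_smul_one_mul hWV, Matrix.mul_assoc _ W, hWQ]
  simp only [Matrix.mul_assoc]

end PetrovGalerkin

theorem interpolation_BQWinv2B_general
    {n m k : ℕ}
    (J R Q : Matrix (Fin n) (Fin n) ℂ)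
    (hQ : Q.PosDef)
    (B : Matrix (Fin n) (Fin m) ℂ)
    (lam : ℂ)
    (hWinv : IsUnit ((J - R) * Q - lam • (1 : Matrix (Fin n) (Fin n) ℂ)).det)
    (V : Matrix (Fin n) (Fin k) ℂ) (hV : Vᴴ * V = 1)
    (W : Matrix (Fin n) (Fin k) ℂ) (hW : W = Q * V * (Vᴴ * Q * V)⁻¹)
    (Jk Rk Qk : Matrix (Fin k) (Fin k) ℂ)
    (hJk : Jk = Wᴴ * J * W) (hRk : Rk = Wᴴ * R * W) (hQk : Qk = Vᴴ * Q * V)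
    (Bk : Matrix (Fin k) (Fin m) ℂ) (hBk : Bk = Wᴴ * B)
    (hWkinv : IsUnit ((Jk - Rk) * Qk - lam • (1 : Matrix (Fin k) (Fin k) ℂ)).det)
    (hincl1 : ∃ Z : Matrix (Fin k) (Fin m) ℂ,
      V * Z = ((J - R) * Q - lam • (1 : Matrix (Fin n) (Fin n) ℂ))⁻¹ * B)
    (hincl2 : ∃ Z : Matrix (Fin k) (Fin m) ℂ,
      V * Z = (((J - R) * Q - lam • (1 : Matrix (Fin n) (Fin n) ℂ))⁻¹ ^ 2) * B) :
    Bᴴ * Q * (((J - R) * Q - lam • (1 : Matrix (Fin n) (Fin n) ℂ))⁻¹ ^ 2) * B =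
    Bkᴴ * Qk * (((Jk - Rk) * Qk - lam • (1 : Matrix (Fin k) (Fin k) ℂ))⁻¹ ^ 2) * Bk := by
  set M := (J - R) * Q - lam • (1 : Matrix (Fin n) (Fin n) ℂ)
  have hVinj : Function.Injective V.mulVec :=
    Function.LeftInverse.injective (g := (Vᴴ *ᵥ ·)) fun x => by
      simp only [mulVec_mulVec, hV, one_mulVec]
  have hQkU : IsUnit (Vᴴ * Q * V).det :=
    (hQ.conjTranspose_mul_mul_same hVinj).det_pos.ne'.isUnit
  have hWQ : W * Qk = Q * V := by
    rw [hW, hQk, nonsing_inv_mul_cancel_right _ _ hQkU]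
  have hWV : Wᴴ * V = 1 := by
    rw [hW, conjTranspose_mul_mul_nonsing_inv_mul hQ.1 hQkU]
  have hMk : (Jk - Rk) * Qk - lam • 1 = Wᴴ * M * V := by
    rw [hJk, hRk, ← Matrix.sub_mul, ← Matrix.mul_sub,
      conjTranspose_mul_mul_mul_sub_smul_one hWQ hWV]
  obtain ⟨Z, hZ⟩ := hincl1
  obtain ⟨Y, hY⟩ := hincl2
  have hYk : Y = (Wᴴ * M * V)⁻¹ ^ 2 * Bk := by
    rw [hMk] at hWkinv
    rw [hBk]
    exact eq_projected_inv_sq_mul_of_mul_eq_inv_sq_mul hWV hWinv hWkinv hZ hY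
  have hBkQk : Bkᴴ * Qk = Bᴴ * Q * V := by
    rw [hBk, conjTranspose_mul, conjTranspose_conjTranspose, Matrix.mul_assoc, hWQ,
      Matrix.mul_assoc]
  rw [hMk, Matrix.mul_assoc _ _ Bk, ← hYk, hBkQk, Matrix.mul_assoc _ _ B, ← hY]
  simp only [Matrix.mul_assoc]

/-- If the columns of `W(λ̂)⁻¹B` and `W(λ̂)⁻²B` lie in the column space of `V_k`, and the first
`m` columns of `V_k` form an orthonormal basis of the column space of `W(λ̂)⁻¹B`, then the
structure-preserving projection matches `Bᴴ Q W(λ)⁻² B` at `λ̂`. -/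
theorem interpolation_BQWinv2B
    {n m k : ℕ} (hmk : m ≤ k)
    (J R Q : Matrix (Fin n) (Fin n) ℂ)
    (hJ : Jᴴ = -J) (hR : R.PosSemidef) (hQ : Q.PosDef)
    (B : Matrix (Fin n) (Fin m) ℂ)
    (lam : ℂ)
    (hWinv : IsUnit ((J - R) * Q - lam • (1 : Matrix (Fin n) (Fin n) ℂ)).det)
    (V : Matrix (Fin n) (Fin k) ℂ) (hV : Vᴴ * V = 1)
    (hVt : LinearMap.range (V.submatrix (id : Fin n → Fin n) (Fin.castLE hmk)).mulVecLin =
      LinearMap.range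
        (((J - R) * Q - lam • (1 : Matrix (Fin n) (Fin n) ℂ))⁻¹ * B).mulVecLin)
    (W : Matrix (Fin n) (Fin k) ℂ) (hW : W = Q * V * (Vᴴ * Q * V)⁻¹)
    (Jk Rk Qk : Matrix (Fin k) (Fin k) ℂ)
    (hJk : Jk = Wᴴ * J * W) (hRk : Rk = Wᴴ * R * W) (hQk : Qk = Vᴴ * Q * V)
    (Bk : Matrix (Fin k) (Fin m) ℂ) (hBk : Bk = Wᴴ * B)
    (hWkinv : IsUnit ((Jk - Rk) * Qk - lam • (1 : Matrix (Fin k) (Fin k) ℂ)).det)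
    (hincl1 : ∃ Z : Matrix (Fin k) (Fin m) ℂ,
      V * Z = ((J - R) * Q - lam • (1 : Matrix (Fin n) (Fin n) ℂ))⁻¹ * B)
    (hincl2 : ∃ Z : Matrix (Fin k) (Fin m) ℂ,
      V * Z = (((J - R) * Q - lam • (1 : Matrix (Fin n) (Fin n) ℂ))⁻¹ ^ 2) * B) :
    Bᴴ * Q * (((J - R) * Q - lam • (1 : Matrix (Fin n) (Fin n) ℂ))⁻¹ ^ 2) * B =
    Bkᴴ * Qk * (((Jk - Rk) * Qk - lam • (1 : Matrix (Fin k) (Fin k) ℂ))⁻¹ ^ 2) * Bk :=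
  interpolation_BQWinv2B_general J R Q hQ B lam hWinv V hV W hW Jk Rk Qk hJk hRk hQk Bk hBk hWkinv
    hincl1 hincl2
end

section
/- Let (J,R,Q) be a DH triple of size n, B ∈ ℂ^{n×m}, ω̂ ∈ ℝ, and let V_k ∈ ℂ^{n×k} have orthonormal columns such that every column of W(iω̂)⁻¹ B and every column of W(iω̂)⁻² B lies in the column space of V_k, where W(λ) := (J−R)Q − λ·I_n is assumed invertible at λ = iω̂. Set W_k := Q V_k (V_kᴴ Q V_k)⁻¹, J_k := W_kᴴ J W_k, R_k := W_kᴴ R W_k, Q_k := V_kᴴ Q V_k, B_k := W_kᴴ B, W_k(λ) := (J_k−R_k)Q_k − λ·I_k, and assume W_k(iω̂) is invertible. Assume H̃₀(iω̂) := Bᴴ W(iω̂)⁻ᴴ Q B Bᴴ Q W(iω̂)⁻¹ B and H̃_{k,0}(iω̂) := B_kᴴ W_k(iω̂)⁻ᴴ Q_k B_k B_kᴴ Q_k W_k(iω̂)⁻¹ B_k are positive definite, let L, L_k be their lower triangular Cholesky factors with positive real diagonals, and define H₀ := L⁻¹L⁻ᴴ, H_{k,0} := L_k⁻¹L_k⁻ᴴ,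 H̃₁ := L⁻¹ Bᴴ W(iω̂)⁻ᴴ Q B L⁻ᴴ, H̃_{k,1} := L_k⁻¹ B_kᴴ W_k(iω̂)⁻ᴴ Q_k B_k L_k⁻ᴴ, H₁ := i(H̃₁ − H̃₁ᴴ), H_{k,1} := i(H̃_{k,1} − H̃_{k,1}ᴴ). Then the supremum over t ∈ ℝ of λ_min(H₀ + t·H₁) equals the supremum over t ∈ ℝ of λ_min(H_{k,0} + t·H_{k,1}) (as an equality in the extended reals); in particular one supremum is finite if and only if the other is. -/
open Matrix
open scoped ComplexOrder

/-!
The interpolation condition `V Z = W(iω̂)⁻¹ B` makes the Petrov–Galerkin reduced model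
reproduce the moment `G := Bᴴ Q W(iω̂)⁻¹ B` exactly: `W_k(iω̂) = W_kᴴ W(iω̂) V`, so
`W_k(iω̂)⁻¹ B_k = Z`, and `W_k Q_k = Q V` turns `B_kᴴ Q_k Z` back into `G`. All the data of the
inner problem, namely `H̃₀ = Gᴴ G`, its Cholesky factor (unique once the diagonal is positive)
and `Gᴴ`, is then the same for the full and the reduced model, so the two families
`t ↦ H₀ + t H₁` coincide.
-/

lemma Complex.eq_one_of_mul_eq_of_mul_star_self_eq_one {a b d : ℂ} (ha : 0 < a) (hb : 0 < b)
    (h : a = b * d) (hd : d * star d = 1) : d = 1 := by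
  have hsa : star a = a := IsSelfAdjoint.of_nonneg ha.le
  have hsb : star b = b := IsSelfAdjoint.of_nonneg hb.le
  have h₁ : a * star d = b := by rw [h, mul_assoc, hd, mul_one]
  have h₂ : a * d = b := by simpa [hsa, hsb] using congrArg star h₁
  have hab : a + b ≠ 0 := (add_pos ha hb).ne'
  exact (mul_eq_right₀ hab).1 (by linear_combination h₂ - h)

namespace Matrix

section Triangular

variable {ι : Type*} [Fintype ι] [LinearOrder ι]

lemma IsLowerTriangular.isDiag_of_mul_conjTranspose_eq_one {𝕜 : Type*} [CommRing 𝕜]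
    [StarRing 𝕜] [DecidableEq ι] {A : Matrix ι ι 𝕜} (hA : A.IsLowerTriangular) (h : A * Aᴴ = 1) :
    A.IsDiag := by
  have : Invertible A := invertibleOfRightInverse A Aᴴ h
  have hAH : Aᴴ.IsLowerTriangular :=
    inv_eq_right_inv h ▸ blockTriangular_inv_of_blockTriangular hA
  intro i j hij
  rcases hij.lt_or_gt with hlt | hgt
  · exact hA hlt
  · simpa using hAH (i := j) (j := i) hgt

variable [DecidableEq ι]

theorem IsLowerTriangular.isUnit_det_of_pos_diag {L : Matrix ι ι ℂ} (hL : L.IsLowerTriangular)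
    (hd : ∀ i, 0 < L i i) : IsUnit L.det := by
  rw [det_of_isLowerTriangular L hL, isUnit_iff_ne_zero, Finset.prod_ne_zero_iff]
  exact fun i _ => (hd i).ne'

theorem eq_of_mul_conjTranspose_eq_of_isLowerTriangular {L L' : Matrix ι ι ℂ}
    (hL : L.IsLowerTriangular) (hL' : L'.IsLowerTriangular)
    (hLd : ∀ i, 0 < L i i) (hL'd : ∀ i, 0 < L' i i) (h : L * Lᴴ = L' * L'ᴴ) : L = L' := by
  have hdet := hL'.isUnit_det_of_pos_diag hL'd
  have : Invertible L' := invertibleOfIsUnitDet L' hdet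
  obtain ⟨A, hA⟩ : ∃ A, A = L'⁻¹ * L := ⟨_, rfl⟩
  have hAL : L = L' * A := by rw [hA, mul_nonsing_inv_cancel_left _ _ hdet]
  have hAA : A * Aᴴ = 1 := by
    rw [hA, conjTranspose_mul, conjTranspose_nonsing_inv]
    calc L'⁻¹ * L * (Lᴴ * L'ᴴ⁻¹) = L'⁻¹ * L' * (L'ᴴ * L'ᴴ⁻¹) := by
          simp only [Matrix.mul_assoc, ← Matrix.mul_assoc L, h]
      _ = 1 := by
          rw [nonsing_inv_mul _ hdet, mul_nonsing_inv _ (by simpa using hdet.star), Matrix.one_mul]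
  have hAdiag : A.IsDiag := IsLowerTriangular.isDiag_of_mul_conjTranspose_eq_one
    (hA ▸ (blockTriangular_inv_of_blockTriangular hL').mul hL) hAA
  rw [← hAdiag.diagonal_diag] at hAL hAA
  have hd : A.diag = fun _ => 1 := funext fun i =>
    Complex.eq_one_of_mul_eq_of_mul_star_self_eq_one (hLd i) (hL'd i)
      (by simpa using congrFun₂ hAL i i) (by simpa using congrFun₂ hAA i i)
  rw [hAL, hd, diagonal_one, Matrix.mul_one]

end Triangular

section PetrovGalerkin

variable {α : Type*} [CommRing α] [StarRing α] {n k m : Type*} [Fintype n] [Fintype k]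
  [DecidableEq k]

lemma conjTranspose_mul_mul_inv_mul_eq_one {Q : Matrix n n α} {V : Matrix n k α}
    (hQ : Q.IsHermitian) (hQV : IsUnit (Vᴴ * Q * V).det) :
    (Q * V * (Vᴴ * Q * V)⁻¹)ᴴ * V = 1 := by
  have hQVH : (Vᴴ * Q * V)ᴴ = Vᴴ * Q * V := (isHermitian_conjTranspose_mul_mul V hQ).eq
  rw [conjTranspose_mul, conjTranspose_nonsing_inv, hQVH, conjTranspose_mul, hQ.eq,
    Matrix.mul_assoc, nonsing_inv_mul _ hQV]

lemma conjTranspose_mul_mul_mul_sub_smul [DecidableEq n] {W V : Matrix n k α} {Q : Matrix n n α}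
    {Qk : Matrix k k α} (A : Matrix n n α) (c : α) (hWV : Wᴴ * V = 1) (hWQ : W * Qk = Q * V) :
    Wᴴ * A * W * Qk - c • 1 = Wᴴ * (A * Q - c • 1) * V := by
  rw [Matrix.mul_sub, Matrix.sub_mul, Matrix.mul_smul, Matrix.smul_mul, Matrix.mul_one, hWV,
    Matrix.mul_assoc _ W, hWQ, Matrix.mul_assoc, Matrix.mul_assoc, Matrix.mul_assoc]

lemma inv_conjTranspose_mul_mul_mul_eq [DecidableEq n] {W V : Matrix n k α} {M : Matrix n n α}
    {B : Matrix n m α} {Z : Matrix k m α} (hM : IsUnit M.det) (hZ : V * Z = M⁻¹ * B)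
    (hMk : IsUnit (Wᴴ * M * V).det) :
    (Wᴴ * M * V)⁻¹ * (Wᴴ * B) = Z := by
  have hB : Wᴴ * B = Wᴴ * M * V * Z := by
    rw [Matrix.mul_assoc _ V, hZ, Matrix.mul_assoc, mul_nonsing_inv_cancel_left _ _ hM]
  rw [hB, nonsing_inv_mul_cancel_left _ _ hMk]

lemma conjTranspose_mul_mul_inv_mul_eq_of_mul_eq [DecidableEq n] {W V : Matrix n k α}
    {Q M : Matrix n n α} {Qk : Matrix k k α} {B : Matrix n m α} {Z : Matrix k m α}
    (hM : IsUnit M.det) (hMk : IsUnit (Wᴴ * M * V).det) (hWQ : W * Qk = Q * V)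
    (hZ : V * Z = M⁻¹ * B) :
    (Wᴴ * B)ᴴ * Qk * (Wᴴ * M * V)⁻¹ * (Wᴴ * B) = Bᴴ * Q * M⁻¹ * B := by
  rw [Matrix.mul_assoc _ _ (Wᴴ * B), inv_conjTranspose_mul_mul_mul_eq hM hZ hMk,
    conjTranspose_mul, conjTranspose_conjTranspose, Matrix.mul_assoc Bᴴ W, hWQ,
    Matrix.mul_assoc, Matrix.mul_assoc, hZ]
  simp only [Matrix.mul_assoc]

theorem conjTranspose_mul_mul_inv_mul_eq_of_petrovGalerkin [DecidableEq n] {Q A : Matrix n n α}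
    {V W : Matrix n k α} {B : Matrix n m α} {Z : Matrix k m α} {c : α} (hQ : Q.IsHermitian)
    (hQV : IsUnit (Vᴴ * Q * V).det) (hW : W = Q * V * (Vᴴ * Q * V)⁻¹)
    (hM : IsUnit (A * Q - c • 1).det) (hMk : IsUnit (Wᴴ * A * W * (Vᴴ * Q * V) - c • 1).det)
    (hZ : V * Z = (A * Q - c • 1)⁻¹ * B) :
    (Wᴴ * B)ᴴ * (Vᴴ * Q * V) * (Wᴴ * A * W * (Vᴴ * Q * V) - c • 1)⁻¹ * (Wᴴ * B) =
      Bᴴ * Q * (A * Q - c • 1)⁻¹ * B := by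
  have hWV : Wᴴ * V = 1 := hW ▸ conjTranspose_mul_mul_inv_mul_eq_one hQ hQV
  have hWQ : W * (Vᴴ * Q * V) = Q * V := by rw [hW, nonsing_inv_mul_cancel_right _ _ hQV]
  rw [conjTranspose_mul_mul_mul_sub_smul A c hWV hWQ] at hMk ⊢
  exact conjTranspose_mul_mul_inv_mul_eq_of_mul_eq hM hMk hWQ hZ

end PetrovGalerkin

end Matrix

theorem interpolation_inner_supremum_general
    {n m k : ℕ}
    (J R Q : Matrix (Fin n) (Fin n) ℂ)
    (hQ : Q.PosDef)
    (B : Matrix (Fin n) (Fin m) ℂ)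
    (omg : ℝ)
    (V : Matrix (Fin n) (Fin k) ℂ) (hV : Vᴴ * V = 1)
    (Wm : Matrix (Fin n) (Fin n) ℂ)
    (hWm : Wm = (J - R) * Q - (Complex.I * (omg : ℂ)) • 1)
    (hWinv : IsUnit Wm.det)
    (Wk : Matrix (Fin n) (Fin k) ℂ) (hWk : Wk = Q * V * (Vᴴ * Q * V)⁻¹)
    (Jk Rk Qk : Matrix (Fin k) (Fin k) ℂ)
    (hJk : Jk = Wkᴴ * J * Wk) (hRk : Rk = Wkᴴ * R * Wk) (hQk : Qk = Vᴴ * Q * V)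
    (Bk : Matrix (Fin k) (Fin m) ℂ) (hBk : Bk = Wkᴴ * B)
    (Wkm : Matrix (Fin k) (Fin k) ℂ)
    (hWkm : Wkm = (Jk - Rk) * Qk - (Complex.I * (omg : ℂ)) • 1)
    (hWkinv : IsUnit Wkm.det)
    (hincl1 : ∃ Z : Matrix (Fin k) (Fin m) ℂ, V * Z = Wm⁻¹ * B)
    (H0t : Matrix (Fin m) (Fin m) ℂ) (hH0t : H0t = Bᴴ * (Wm⁻¹)ᴴ * Q * B * Bᴴ * Q * Wm⁻¹ * B)
    (Hk0t : Matrix (Fin m) (Fin m) ℂ)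
    (hHk0t : Hk0t = Bkᴴ * (Wkm⁻¹)ᴴ * Qk * Bk * Bkᴴ * Qk * Wkm⁻¹ * Bk)
    (L Lk : Matrix (Fin m) (Fin m) ℂ)
    (hLtri : ∀ i j : Fin m, i < j → L i j = 0)
    (hLdiag : ∀ i : Fin m, 0 < (L i i).re ∧ (L i i).im = 0)
    (hLchol : L * Lᴴ = H0t)
    (hLktri : ∀ i j : Fin m, i < j → Lk i j = 0)
    (hLkdiag : ∀ i : Fin m, 0 < (Lk i i).re ∧ (Lk i i).im = 0)
    (hLkchol : Lk * Lkᴴ = Hk0t)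
    (H0 Hk0 : Matrix (Fin m) (Fin m) ℂ)
    (hH0 : H0 = L⁻¹ * (L⁻¹)ᴴ) (hHk0 : Hk0 = Lk⁻¹ * (Lk⁻¹)ᴴ)
    (H1t Hk1t : Matrix (Fin m) (Fin m) ℂ)
    (hH1t : H1t = L⁻¹ * (Bᴴ * (Wm⁻¹)ᴴ * Q * B) * (L⁻¹)ᴴ)
    (hHk1t : Hk1t = Lk⁻¹ * (Bkᴴ * (Wkm⁻¹)ᴴ * Qk * Bk) * (Lk⁻¹)ᴴ)
    (H1 Hk1 : Matrix (Fin m) (Fin m) ℂ)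
    (hH1 : H1 = Complex.I • (H1t - H1tᴴ)) (hHk1 : Hk1 = Complex.I • (Hk1t - Hk1tᴴ)) :
    (⨆ t : ℝ, ((lambdaMin (H0 + (t : ℂ) • H1) : ℝ) : EReal)) =
      (⨆ t : ℝ, ((lambdaMin (Hk0 + (t : ℂ) • Hk1) : ℝ) : EReal)) ∧
    (BddAbove (Set.range fun t : ℝ => lambdaMin (H0 + (t : ℂ) • H1)) ↔
      BddAbove (Set.range fun t : ℝ => lambdaMin (Hk0 + (t : ℂ) • Hk1))) := by
  obtain ⟨Z, hZ⟩ := hincl1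
  have hQk_pd : Qk.PosDef := hQk ▸ hQ.conjTranspose_mul_mul_same
    (Function.LeftInverse.injective (g := Vᴴ.mulVec) fun x => by simp [hV])
  have hmoment : Bkᴴ * Qk * Wkm⁻¹ * Bk = Bᴴ * Q * Wm⁻¹ * B := by
    have hJRk : Jk - Rk = Wkᴴ * (J - R) * Wk := by rw [hJk, hRk, Matrix.mul_sub, Matrix.sub_mul]
    rw [hWkm, hJRk] at hWkinv ⊢
    subst hWm hBk hQk
    exact conjTranspose_mul_mul_inv_mul_eq_of_petrovGalerkin hQ.1
      (hQk_pd.isUnit.map detMonoidHom) hWk hWinv hWkinv hZ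
  have hmomentH : Bkᴴ * (Wkm⁻¹)ᴴ * Qk * Bk = Bᴴ * (Wm⁻¹)ᴴ * Q * B := by
    simpa [conjTranspose_mul, hQ.1.eq, hQk_pd.1.eq, Matrix.mul_assoc] using
      congrArg conjTranspose hmoment
  have hH0t_eq : Hk0t = H0t := by
    rw [hHk0t, hH0t]
    calc _ = (Bkᴴ * (Wkm⁻¹)ᴴ * Qk * Bk) * (Bkᴴ * Qk * Wkm⁻¹ * Bk) := by
          simp only [Matrix.mul_assoc]
      _ = (Bᴴ * (Wm⁻¹)ᴴ * Q * B) * (Bᴴ * Q * Wm⁻¹ * B) := by rw [hmomentH, hmoment]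
      _ = _ := by simp only [Matrix.mul_assoc]
  have hpos : ∀ {z : ℂ}, 0 < z.re ∧ z.im = 0 → 0 < z := fun h =>
    Complex.lt_def.2 ⟨h.1, h.2.symm⟩
  have hL : L = Lk := eq_of_mul_conjTranspose_eq_of_isLowerTriangular
    (fun _ _ h => hLtri _ _ h) (fun _ _ h => hLktri _ _ h) (fun i => hpos (hLdiag i))
    (fun i => hpos (hLkdiag i)) (by rw [hLchol, hLkchol, hH0t_eq])
  have hH0_eq : H0 = Hk0 := by rw [hH0, hHk0, hL]
  have hH1_eq : H1 = Hk1 := by rw [hH1, hHk1, hH1t, hHk1t, hL, hmomentH]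
  rw [hH0_eq, hH1_eq]
  exact ⟨rfl, Iff.rfl⟩

/-- If the subspace contains the columns of `W(iω̂)⁻¹B` and `W(iω̂)⁻²B`, then the inner
suprema `sup_t λ_min(H₀ + tH₁)` for the full and the reduced problem coincide (in the
extended reals); in particular one is finite iff the other is. -/
theorem interpolation_inner_supremum
    {n m k : ℕ}
    (J R Q : Matrix (Fin n) (Fin n) ℂ)
    (hJ : Jᴴ = -J) (hR : R.PosSemidef) (hQ : Q.PosDef)
    (B : Matrix (Fin n) (Fin m) ℂ)
    (omg : ℝ)
    (V : Matrix (Fin n) (Fin k) ℂ) (hV : Vᴴ * V = 1)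
    (Wm : Matrix (Fin n) (Fin n) ℂ)
    (hWm : Wm = (J - R) * Q - (Complex.I * (omg : ℂ)) • 1)
    (hWinv : IsUnit Wm.det)
    (Wk : Matrix (Fin n) (Fin k) ℂ) (hWk : Wk = Q * V * (Vᴴ * Q * V)⁻¹)
    (Jk Rk Qk : Matrix (Fin k) (Fin k) ℂ)
    (hJk : Jk = Wkᴴ * J * Wk) (hRk : Rk = Wkᴴ * R * Wk) (hQk : Qk = Vᴴ * Q * V)
    (Bk : Matrix (Fin k) (Fin m) ℂ) (hBk : Bk = Wkᴴ * B)
    (Wkm : Matrix (Fin k) (Fin k) ℂ)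
    (hWkm : Wkm = (Jk - Rk) * Qk - (Complex.I * (omg : ℂ)) • 1)
    (hWkinv : IsUnit Wkm.det)
    (hincl1 : ∃ Z : Matrix (Fin k) (Fin m) ℂ, V * Z = Wm⁻¹ * B)
    (hincl2 : ∃ Z : Matrix (Fin k) (Fin m) ℂ, V * Z = (Wm⁻¹ ^ 2) * B)
    (H0t : Matrix (Fin m) (Fin m) ℂ) (hH0t : H0t = Bᴴ * (Wm⁻¹)ᴴ * Q * B * Bᴴ * Q * Wm⁻¹ * B)
    (Hk0t : Matrix (Fin m) (Fin m) ℂ)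
    (hHk0t : Hk0t = Bkᴴ * (Wkm⁻¹)ᴴ * Qk * Bk * Bkᴴ * Qk * Wkm⁻¹ * Bk)
    (hH0pd : H0t.PosDef) (hHk0pd : Hk0t.PosDef)
    (L Lk : Matrix (Fin m) (Fin m) ℂ)
    (hLtri : ∀ i j : Fin m, i < j → L i j = 0)
    (hLdiag : ∀ i : Fin m, 0 < (L i i).re ∧ (L i i).im = 0)
    (hLchol : L * Lᴴ = H0t)
    (hLktri : ∀ i j : Fin m, i < j → Lk i j = 0)
    (hLkdiag : ∀ i : Fin m, 0 < (Lk i i).re ∧ (Lk i i).im = 0)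
    (hLkchol : Lk * Lkᴴ = Hk0t)
    (H0 Hk0 : Matrix (Fin m) (Fin m) ℂ)
    (hH0 : H0 = L⁻¹ * (L⁻¹)ᴴ) (hHk0 : Hk0 = Lk⁻¹ * (Lk⁻¹)ᴴ)
    (H1t Hk1t : Matrix (Fin m) (Fin m) ℂ)
    (hH1t : H1t = L⁻¹ * (Bᴴ * (Wm⁻¹)ᴴ * Q * B) * (L⁻¹)ᴴ)
    (hHk1t : Hk1t = Lk⁻¹ * (Bkᴴ * (Wkm⁻¹)ᴴ * Qk * Bk) * (Lk⁻¹)ᴴ)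
    (H1 Hk1 : Matrix (Fin m) (Fin m) ℂ)
    (hH1 : H1 = Complex.I • (H1t - H1tᴴ)) (hHk1 : Hk1 = Complex.I • (Hk1t - Hk1tᴴ)) :
    (⨆ t : ℝ, ((lambdaMin (H0 + (t : ℂ) • H1) : ℝ) : EReal)) =
      (⨆ t : ℝ, ((lambdaMin (Hk0 + (t : ℂ) • Hk1) : ℝ) : EReal)) ∧
    (BddAbove (Set.range fun t : ℝ => lambdaMin (H0 + (t : ℂ) • H1)) ↔
      BddAbove (Set.range fun t : ℝ => lambdaMin (Hk0 + (t : ℂ) • Hk1))) :=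
  interpolation_inner_supremum_general J R Q hQ B omg V hV Wm hWm hWinv Wk hWk Jk Rk Qk hJk hRk hQk
    Bk hBk Wkm hWkm hWkinv hincl1 H0t hH0t Hk0t hHk0t L Lk hLtri hLdiag hLchol hLktri hLkdiag
    hLkchol H0 Hk0 hH0 hHk0 H1t Hk1t hH1t hHk1t H1 Hk1 hH1 hHk1
end

section
/- Let L ∈ ℂ^{m×m} be an invertible lower triangular matrix whose diagonal entries are real and positive, and let S ∈ ℂ^{m×m}. Then there is at most one lower triangular matrix X ∈ ℂ^{m×m} with real diagonal entries satisfying L·Xᴴ + X·Lᴴ = S; that is, if X₁ and X₂ are lower triangular with real diagonal entries and L·X₁ᴴ + X₁·Lᴴ = L·X₂ᴴ + X₂·Lᴴ, then X₁ = X₂. -/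
/-!
Put `Y = X1 - X2` and `A = L⁻¹ Y`. Then `Y` is lower triangular with real diagonal and
`L Yᴴ + Y Lᴴ = 0`, so `A + Aᴴ = L⁻¹ (L Yᴴ + Y Lᴴ) L⁻ᴴ = 0`. A lower triangular skew-Hermitian
matrix is diagonal with purely imaginary entries; but `Y i i = L i i * A i i` is real and
`L i i` is real and nonzero, so `A i i` is also real. Hence `A = 0` and `Y = 0`.
-/

open Matrix

namespace Matrix

variable {n R : Type*}

theorem BlockTriangular.eq_diagonal_of_add_conjTranspose_eq_zero [Fintype n] [DecidableEq n]
    [LinearOrder n] [AddGroup R] [StarAddMonoid R] {A : Matrix n n R}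
    (hA : A.BlockTriangular OrderDual.toDual) (hskew : A + Aᴴ = 0) :
    A = diagonal A.diag := by
  ext i j
  rcases lt_trichotomy i j with hij | rfl | hji
  · rw [hA hij, diagonal_apply_ne _ hij.ne]
  · rw [diagonal_apply_eq, diag_apply]
  · have hentry : A i j + star (A j i) = 0 := by
      simpa only [add_apply, conjTranspose_apply, zero_apply] using congr_fun₂ hskew i j
    rw [hA hji, star_zero, add_zero] at hentry
    rw [hentry, diagonal_apply_ne _ hji.ne']

theorem inv_mul_add_conjTranspose_inv_mul [Fintype n] [DecidableEq n] [CommRing R] [StarRing R]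
    {L : Matrix n n R} (hL : IsUnit L.det) (Y : Matrix n n R) :
    L⁻¹ * Y + (L⁻¹ * Y)ᴴ = L⁻¹ * (L * Yᴴ + Y * Lᴴ) * Lᴴ⁻¹ := by
  have hLH : IsUnit Lᴴ.det := by
    rw [det_conjTranspose]
    exact hL.star
  rw [conjTranspose_mul, conjTranspose_nonsing_inv, Matrix.mul_add, Matrix.add_mul,
    ← Matrix.mul_assoc, ← Matrix.mul_assoc, nonsing_inv_mul L hL, Matrix.one_mul,
    Matrix.mul_assoc (L⁻¹ * Y), mul_nonsing_inv _ hLH, Matrix.mul_one, add_comm]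

end Matrix

theorem Complex.eq_zero_of_add_star_eq_zero_of_im_mul_eq_zero {c d : ℂ} (hcim : c.im = 0)
    (hcre : c.re ≠ 0) (hd : d + star d = 0) (hcd : (c * d).im = 0) : d = 0 := by
  have hre : d.re = 0 := by
    have := congr_arg Complex.re hd
    rw [add_re, star_def, conj_re, zero_re] at this
    linarith
  have him : d.im = 0 := by
    rw [mul_im, hcim, zero_mul, add_zero] at hcd
    exact (mul_eq_zero.mp hcd).resolve_left hcre
  exact Complex.ext hre him

/-- For `L` invertible lower triangular with real positive diagonal, the equation
`L Xᴴ + X Lᴴ = S` has at most one lower triangular solution `X` with real diagonal. -/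
theorem lower_triangular_solution_unique
    {m : ℕ}
    (L : Matrix (Fin m) (Fin m) ℂ)
    (hLtri : ∀ i j : Fin m, i < j → L i j = 0)
    (hLdiag : ∀ i : Fin m, 0 < (L i i).re ∧ (L i i).im = 0)
    (hLinv : IsUnit L.det)
    (X1 X2 : Matrix (Fin m) (Fin m) ℂ)
    (hX1tri : ∀ i j : Fin m, i < j → X1 i j = 0)
    (hX1diag : ∀ i : Fin m, (X1 i i).im = 0)
    (hX2tri : ∀ i j : Fin m, i < j → X2 i j = 0)
    (hX2diag : ∀ i : Fin m, (X2 i i).im = 0)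
    (heq : L * X1ᴴ + X1 * Lᴴ = L * X2ᴴ + X2 * Lᴴ) :
    X1 = X2 := by
  set Y := X1 - X2
  have hLlower : L.BlockTriangular OrderDual.toDual := fun i j h => hLtri i j h
  have hYlower : Y.BlockTriangular OrderDual.toDual :=
    BlockTriangular.sub (fun i j h => hX1tri i j h) (fun i j h => hX2tri i j h)
  have hYzero : L * Yᴴ + Y * Lᴴ = 0 :=
    calc L * Yᴴ + Y * Lᴴ = (L * X1ᴴ + X1 * Lᴴ) - (L * X2ᴴ + X2 * Lᴴ) := by
          simp only [Y, conjTranspose_sub, Matrix.mul_sub, Matrix.sub_mul]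
          abel
      _ = 0 := by rw [heq, sub_self]
  have : Invertible L := L.invertibleOfIsUnitDet hLinv
  set A := L⁻¹ * Y
  have hskew : A + Aᴴ = 0 := by
    rw [inv_mul_add_conjTranspose_inv_mul hLinv, hYzero, Matrix.mul_zero, Matrix.zero_mul]
  have hAdiag : A = diagonal A.diag :=
    ((blockTriangular_inv_of_blockTriangular hLlower).mul hYlower
      ).eq_diagonal_of_add_conjTranspose_eq_zero hskew
  have hYLA : Y = L * diagonal A.diag := by
    rw [← hAdiag, ← Matrix.mul_assoc, mul_nonsing_inv L hLinv, Matrix.one_mul]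
  have hA : A.diag = 0 := by
    funext i
    have hskew_ii : A i i + star (A i i) = 0 := by
      simpa only [Matrix.add_apply, conjTranspose_apply, Matrix.zero_apply]
        using congr_fun₂ hskew i i
    have hYii : (L i i * A.diag i).im = 0 := by
      rw [← mul_diagonal, ← hYLA]
      simp only [Y, Matrix.sub_apply, Complex.sub_im, hX1diag, hX2diag, sub_zero]
    exact Complex.eq_zero_of_add_star_eq_zero_of_im_mul_eq_zero (hLdiag i).2 (hLdiag i).1.ne'
      hskew_ii hYii
  rw [← sub_eq_zero]
  change Y = 0
  rw [hYLA, hA, Pi.zero_def, diagonal_zero, Matrix.mul_zero]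
end

section
/- Let (J,R,Q) be a DH triple of size n, i.e., J ∈ ℂ^{n×n} is skew-Hermitian, R ∈ ℂ^{n×n} is Hermitian positive semidefinite, and Q ∈ ℂ^{n×n} is Hermitian positive definite. Then every eigenvalue λ ∈ ℂ of the DH matrix (J−R)Q satisfies Re λ ≤ 0. -/
/-!
Put `y = Q x`. Since `Q` is Hermitian, `λ (xᴴ Q x) = yᴴ (J - R) y`. Here `xᴴ Q x > 0`, while
`yᴴ J y` is purely imaginary and `yᴴ R y ≥ 0`, so the real part of the right-hand side is `≤ 0`.
-/

open Matrix
open scoped ComplexOrder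

namespace Matrix

section Eigenvector

variable {ι α : Type*} [Fintype ι] [CommRing α] [StarRing α]

theorem IsHermitian.mul_dotProduct_mulVec_of_mul_mulVec_eq_smul {A Q : Matrix ι ι α}
    (hQ : Q.IsHermitian) {lam : α} {x : ι → α} (heig : (A * Q) *ᵥ x = lam • x) :
    lam * (star x ⬝ᵥ Q *ᵥ x) = star (Q *ᵥ x) ⬝ᵥ A *ᵥ (Q *ᵥ x) := by
  rw [mulVec_mulVec, heig, dotProduct_smul, smul_eq_mul, star_mulVec, hQ.eq,
    ← dotProduct_mulVec]

end Eigenvector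

section Dissipative

variable {ι 𝕜 : Type*} [Fintype ι] [RCLike 𝕜]

theorem re_dotProduct_mulVec_eq_zero_of_conjTranspose_eq_neg {J : Matrix ι ι 𝕜}
    (hJ : Jᴴ = -J) (y : ι → 𝕜) : RCLike.re (star y ⬝ᵥ J *ᵥ y) = 0 := by
  have hconj : star (star y ⬝ᵥ J *ᵥ y) = -(star y ⬝ᵥ J *ᵥ y) := by
    rw [← star_dotProduct, star_mulVec, ← dotProduct_mulVec, hJ, neg_mulVec, dotProduct_neg]
  have hre := congrArg RCLike.re hconj
  rw [RCLike.star_def, RCLike.conj_re, map_neg] at hre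
  linarith

theorem re_dotProduct_sub_mulVec_nonpos {J R : Matrix ι ι 𝕜} (hJ : Jᴴ = -J)
    (hR : R.PosSemidef) (y : ι → 𝕜) : RCLike.re (star y ⬝ᵥ (J - R) *ᵥ y) ≤ 0 := by
  rw [sub_mulVec, dotProduct_sub, map_sub,
    re_dotProduct_mulVec_eq_zero_of_conjTranspose_eq_neg hJ, zero_sub, neg_nonpos]
  exact (RCLike.nonneg_iff.mp (hR.dotProduct_mulVec_nonneg y)).1

end Dissipative

end Matrix

theorem RCLike.re_nonpos_of_mul_pos_of_re_mul_nonpos {𝕜 : Type*} [RCLike 𝕜] {z c : 𝕜}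
    (hc : 0 < c) (hzc : RCLike.re (z * c) ≤ 0) : RCLike.re z ≤ 0 := by
  obtain ⟨r, hr, rfl⟩ := RCLike.pos_iff_exists_ofReal.mp hc
  rw [RCLike.re_mul_ofReal] at hzc
  exact nonpos_of_mul_nonpos_left hzc hr

/-- Every eigenvalue of a dissipative Hamiltonian matrix `(J−R)Q` has nonpositive real
part (Lyapunov stability of DH systems). -/
theorem DH_eigenvalue_re_nonpos
    {n : ℕ}
    (J R Q : Matrix (Fin n) (Fin n) ℂ)
    (hJ : Jᴴ = -J) (hR : R.PosSemidef) (hQ : Q.PosDef)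
    (lam : ℂ) (x : Fin n → ℂ) (hx : x ≠ 0)
    (heig : ((J - R) * Q) *ᵥ x = lam • x) :
    lam.re ≤ 0 := by
  have hquad := hQ.isHermitian.mul_dotProduct_mulVec_of_mul_mulVec_eq_smul heig
  have hdiss := re_dotProduct_sub_mulVec_nonpos hJ hR (Q *ᵥ x)
  rw [← hquad] at hdiss
  exact RCLike.re_nonpos_of_mul_pos_of_re_mul_nonpos (hQ.dotProduct_mulVec_pos hx) hdiss
end
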